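/- arXiv:1903.05812 — 8 statements merged into one kernel-verified Lean document; each statement's English description precedes it below -/
import Mathlib

section
/- Let A be a row-stochastic matrix on a finite set S with n elements, and let μ and ν be probability vectors on S. Then ‖μA − νA‖₁ ≤ (1 − σ(A)) · ‖μ − ν‖₁, where σ(A) is the Dobrushin coefficient of A. -/
/-- The Dobrushin coefficient of a kernel `A` on a finite set `S`:
`σ(A) = min_{s,s'} Σ_t min(A s t, A s' t)`. -/
noncomputable def dobrushin {S : Type*} [Fintype S] [Nonempty S] (A : S → S → ℝ) : ℝ :=
  ⨅ p : S × S, ∑ t, min (A p.1 t) (A p.2 t)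

lemma dobrushin_key {S : Type*} [Fintype S] [Nonempty S] (A : S → S → ℝ)
    (hA1 : ∀ s, ∑ t, A s t = 1) (s s' : S) :
    ∑ t, |A s t - A s' t| ≤ 2 * (1 - dobrushin A) := by
  have h1 : dobrushin A ≤ ∑ t, min (A s t) (A s' t) :=
    ciInf_le (Finite.bddBelow_range _) (s, s')
  have h2 : ∑ t, |A s t - A s' t|
      = (∑ t, A s t) + (∑ t, A s' t) - 2 * ∑ t, min (A s t) (A s' t) := by
    rw [Finset.mul_sum, ← Finset.sum_add_distrib, ← Finset.sum_sub_distrib]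
    refine Finset.sum_congr rfl fun t _ => ?_
    rcases le_total (A s t) (A s' t) with h | h
    · rw [min_eq_left h, abs_of_nonpos (by linarith)]; ring
    · rw [min_eq_right h, abs_of_nonneg (by linarith)]; ring
  rw [h2, hA1, hA1]
  linarith

/-- If `A` is a row-stochastic matrix on a finite set `S` and `μ, ν` are probability
vectors on `S`, then `‖μA − νA‖₁ ≤ (1 − σ(A)) ‖μ − ν‖₁`. -/
theorem dobrushin_contraction {S : Type*} [Fintype S] [Nonempty S]
    (A : S → S → ℝ) (hA0 : ∀ s t, 0 ≤ A s t) (hA1 : ∀ s, ∑ t, A s t = 1)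
    (μ ν : S → ℝ) (hμ0 : ∀ s, 0 ≤ μ s) (hμ1 : ∑ s, μ s = 1)
    (hν0 : ∀ s, 0 ≤ ν s) (hν1 : ∑ s, ν s = 1) :
    ∑ s', |(∑ s, μ s * A s s') - (∑ s, ν s * A s s')| ≤
      (1 - dobrushin A) * ∑ s, |μ s - ν s| := by
  set f : S → ℝ := fun s => max (μ s - ν s) 0 with hf
  set g : S → ℝ := fun s => max (ν s - μ s) 0 with hg
  have hf0 : ∀ s, 0 ≤ f s := fun s => le_max_right _ _
  have hg0 : ∀ s, 0 ≤ g s := fun s => le_max_right _ _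
  have hfg : ∀ s, μ s - ν s = f s - g s := by
    intro s
    simp only [hf, hg, max_def]
    split_ifs <;> linarith
  have habs : ∀ s, |μ s - ν s| = f s + g s := by
    intro s
    rcases le_total (μ s) (ν s) with h | h
    · rw [abs_of_nonpos (by linarith)]
      simp only [hf, hg]
      rw [max_eq_right (by linarith), max_eq_left (by linarith)]
      ring
    · rw [abs_of_nonneg (by linarith)]
      simp only [hf, hg]
      rw [max_eq_left (by linarith), max_eq_right (by linarith)]
      ring
  set c : ℝ := ∑ s, f s with hc
  have hsum : ∑ s, g s = c := by
    have h0 : ∑ s, (μ s - ν s) = 0 := by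
      rw [Finset.sum_sub_distrib, hμ1, hν1]; ring
    have : ∑ s, (f s - g s) = 0 := by
      rw [← h0]; exact Finset.sum_congr rfl fun s _ => (hfg s).symm
    rw [Finset.sum_sub_distrib] at this
    linarith
  have h2c : ∑ s, |μ s - ν s| = 2 * c := by
    rw [show ∑ s, |μ s - ν s| = ∑ s, (f s + g s) from
      Finset.sum_congr rfl fun s _ => habs s]
    rw [Finset.sum_add_distrib, hsum]; ring
  have hc0 : 0 ≤ c := Finset.sum_nonneg fun s _ => hf0 s
  rcases eq_or_lt_of_le hc0 with hceq | hcpos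
  · -- c = 0, so μ = ν
    have hzero : ∀ s, μ s - ν s = 0 := by
      intro s
      have h1 : ∀ s, f s = 0 := by
        intro s
        have := Finset.sum_eq_zero_iff_of_nonneg (fun s _ => hf0 s) |>.mp hceq.symm
        exact this s (Finset.mem_univ s)
      have h2 : ∀ s, g s = 0 := by
        intro s
        have hgz : ∑ s, g s = 0 := by rw [hsum, ← hceq]
        have := Finset.sum_eq_zero_iff_of_nonneg (fun s _ => hg0 s) |>.mp hgz
        exact this s (Finset.mem_univ s)
      rw [hfg s, h1 s, h2 s]; ring
    have : ∀ t, (∑ s, μ s * A s t) - (∑ s, ν s * A s t) = 0 := by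
      intro t
      rw [← Finset.sum_sub_distrib]
      refine Finset.sum_eq_zero fun s _ => ?_
      rw [← sub_mul]
      rw [hzero s]; ring
    rw [h2c, ← hceq]
    simp [this]
  -- main case: c > 0
  have key_t : ∀ t, c * ((∑ s, μ s * A s t) - ∑ s, ν s * A s t)
      = ∑ s, ∑ s', f s * g s' * (A s t - A s' t) := by
    intro t
    have e1 : (∑ s, μ s * A s t) - ∑ s, ν s * A s t
        = (∑ s, f s * A s t) - ∑ s, g s * A s t := by
      rw [← Finset.sum_sub_distrib, ← Finset.sum_sub_distrib]
      refine Finset.sum_congr rfl fun s _ => ?_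
      rw [← sub_mul, ← sub_mul, hfg]
    rw [e1, mul_sub]
    have e2 : c * ∑ s, f s * A s t = ∑ s, ∑ s', f s * g s' * A s t := by
      rw [← hsum, Finset.sum_mul_sum]
      rw [Finset.sum_comm]
      refine Finset.sum_congr rfl fun s _ => Finset.sum_congr rfl fun s' _ => ?_
      ring
    have e3 : c * ∑ s', g s' * A s' t = ∑ s, ∑ s', f s * g s' * A s' t := by
      rw [hc, Finset.sum_mul_sum]
      refine Finset.sum_congr rfl fun s _ => Finset.sum_congr rfl fun s' _ => ?_
      ring
    rw [e2, e3, ← Finset.sum_sub_distrib]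
    refine Finset.sum_congr rfl fun s _ => ?_
    rw [← Finset.sum_sub_distrib]
    refine Finset.sum_congr rfl fun s' _ => ?_
    ring
  have step : (∑ t, |(∑ s, μ s * A s t) - ∑ s, ν s * A s t|) * c
      ≤ c * c * (2 * (1 - dobrushin A)) := by
    calc (∑ t, |(∑ s, μ s * A s t) - ∑ s, ν s * A s t|) * c
        = ∑ t, |c * ((∑ s, μ s * A s t) - ∑ s, ν s * A s t)| := by
          rw [Finset.sum_mul]
          refine Finset.sum_congr rfl fun t _ => ?_
          rw [abs_mul, abs_of_nonneg hc0]; ring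
      _ = ∑ t, |∑ s, ∑ s', f s * g s' * (A s t - A s' t)| := by
          refine Finset.sum_congr rfl fun t _ => ?_
          rw [key_t]
      _ ≤ ∑ t, ∑ s, ∑ s', f s * g s' * |A s t - A s' t| := by
          refine Finset.sum_le_sum fun t _ => ?_
          refine (Finset.abs_sum_le_sum_abs _ _).trans ?_
          refine Finset.sum_le_sum fun s _ => ?_
          refine (Finset.abs_sum_le_sum_abs _ _).trans ?_
          refine Finset.sum_le_sum fun s' _ => ?_
          rw [abs_mul, abs_mul, abs_of_nonneg (hf0 s), abs_of_nonneg (hg0 s')]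
      _ = ∑ s, ∑ s', f s * g s' * ∑ t, |A s t - A s' t| := by
          rw [Finset.sum_comm]
          refine Finset.sum_congr rfl fun s _ => ?_
          rw [Finset.sum_comm]
          refine Finset.sum_congr rfl fun s' _ => ?_
          rw [Finset.mul_sum]
      _ ≤ ∑ s, ∑ s', f s * g s' * (2 * (1 - dobrushin A)) := by
          refine Finset.sum_le_sum fun s _ => Finset.sum_le_sum fun s' _ => ?_
          exact mul_le_mul_of_nonneg_left (dobrushin_key A hA1 s s')
            (mul_nonneg (hf0 s) (hg0 s'))
      _ = c * c * (2 * (1 - dobrushin A)) := by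
          have hcc : c * c = (∑ s, f s) * (∑ s', g s') := by rw [hsum, hc]
          rw [hcc, Finset.sum_mul_sum, Finset.sum_mul]
          refine Finset.sum_congr rfl fun s _ => ?_
          rw [Finset.sum_mul]
  have final : ∑ t, |(∑ s, μ s * A s t) - ∑ s, ν s * A s t|
      ≤ (1 - dobrushin A) * (2 * c) := by
    have := le_of_mul_le_mul_right (by linarith [step] :
      (∑ t, |(∑ s, μ s * A s t) - ∑ s, ν s * A s t|) * c
        ≤ ((1 - dobrushin A) * (2 * c)) * c) hcpos
    exact this
  rw [h2c]
  exact final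
end

section
/- Consider an n × n row-stochastic matrix A with Dobrushin coefficient σ(A) > 0, and a sequence of n × n row-stochastic matrices {A_k}_{k∈ℕ}. Fix ε ∈ (0,1) and set τ := σ(A)ε/(2n). If sup_{k∈ℕ} ‖A_k − A‖∞ ≤ τ, then for any probability vector μ₀ of dimension n, limsup_{k→∞} ‖μ₀A₀A₁⋯A_k − μ*‖₁ ≤ ε, where μ* is the unique probability vector satisfying μ* = μ*A. -/
/-!
Write `d_k = ‖μ_k − μ*‖₁` with `μ_{k+1} = μ_k A_k`. Since `μ* = μ* A`,
`μ_{k+1} − μ* = μ_k (A_k − A) + (μ_k − μ*) A`. Dobrushin's estimate contracts the second term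
by `1 − σ(A)` (the difference has zero sum), and the first is at most `n τ = σ(A) ε / 2`
because `μ_k` is a probability vector. Hence `d_{k+1} ≤ (1 − σ) d_k + σ ε / 2`, and the
`d_k` approach the fixed point `ε / 2` of this affine recursion geometrically.
-/

open Finset Filter Topology

section Oscillation

variable {S : Type*} [Fintype S] [Nonempty S]

/-- Centering `h` at the midpoint of its range costs nothing since `∑ f = 0`. -/
lemma sum_mul_le_of_sum_eq_zero {f h : S → ℝ} {D : ℝ} (hf : ∑ s, f s = 0)
    (hh : ∀ u v, h u - h v ≤ D) : ∑ s, f s * h s ≤ D / 2 * ∑ s, |f s| := by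
  obtain ⟨u, -, hu⟩ := exists_max_image univ h univ_nonempty
  obtain ⟨v, -, hv⟩ := exists_min_image univ h univ_nonempty
  have hc : ∀ s, |h s - (h u + h v) / 2| ≤ D / 2 := fun s => by
    have := hh u v
    have := hu s (mem_univ s)
    have := hv s (mem_univ s)
    rw [abs_le]; constructor <;> linarith
  calc ∑ s, f s * h s = ∑ s, f s * (h s - (h u + h v) / 2) := by
        simp only [mul_sub, sum_sub_distrib, ← sum_mul, hf, zero_mul, sub_zero]
    _ ≤ ∑ s, |f s| * (D / 2) := sum_le_sum fun s _ =>
        (le_abs_self _).trans <| (abs_mul _ _).trans_le <|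
          mul_le_mul_of_nonneg_left (hc s) (abs_nonneg _)
    _ = D / 2 * ∑ s, |f s| := by rw [← sum_mul, mul_comm]

end Oscillation

section Dobrushin

variable {S : Type*} [Fintype S] [Nonempty S] {A : S → S → ℝ}

lemma dobrushin_le (A : S → S → ℝ) (u v : S) : dobrushin A ≤ ∑ t, min (A u t) (A v t) :=
  ciInf_le (Set.finite_range _).bddBelow (u, v)

lemma dobrushin_le_one (hA1 : ∀ s, ∑ t, A s t = 1) : dobrushin A ≤ 1 := by
  obtain ⟨s⟩ := ‹Nonempty S›
  simpa [hA1 s] using dobrushin_le A s s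

lemma sum_abs_sub_le_two_mul_one_sub_dobrushin (hA1 : ∀ s, ∑ t, A s t = 1) (u v : S) :
    ∑ t, |A u t - A v t| ≤ 2 * (1 - dobrushin A) := by
  have hmin : ∀ t, |A u t - A v t| = A u t + A v t - 2 * min (A u t) (A v t) := fun t => by
    rcases le_total (A u t) (A v t) with h | h
    · rw [min_eq_left h, abs_of_nonpos (by linarith)]; ring
    · rw [min_eq_right h, abs_of_nonneg (by linarith)]; ring
  simp only [hmin, sum_sub_distrib, sum_add_distrib, ← mul_sum, hA1]
  linarith [dobrushin_le A u v]

/-- Dobrushin's contraction estimate: testing `f A` against the signs `g` of its entries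
turns it into the oscillation of `A g`. -/
lemma sum_abs_vecMul_le_of_sum_eq_zero (hA1 : ∀ s, ∑ t, A s t = 1) {f : S → ℝ}
    (hf : ∑ s, f s = 0) :
    ∑ t, |∑ s, f s * A s t| ≤ (1 - dobrushin A) * ∑ s, |f s| := by
  set g : S → ℝ := fun t => if 0 ≤ ∑ s, f s * A s t then 1 else -1
  have hg : ∀ t, |g t| ≤ 1 := fun t => by unfold g; split_ifs <;> simp
  have hsign : ∀ t, |∑ s, f s * A s t| = (∑ s, f s * A s t) * g t := fun t => by
    unfold g; split_ifs with h
    · rw [abs_of_nonneg h, mul_one]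
    · rw [abs_of_neg (not_le.1 h), mul_neg_one]
  have hosc : ∀ u v, ∑ t, A u t * g t - ∑ t, A v t * g t ≤ 2 * (1 - dobrushin A) :=
    fun u v => calc
      _ = ∑ t, (A u t - A v t) * g t := by rw [← sum_sub_distrib]; simp only [sub_mul]
      _ ≤ ∑ t, |A u t - A v t| := sum_le_sum fun t _ =>
          (le_abs_self _).trans <| (abs_mul _ _).trans_le <|
            mul_le_of_le_one_right (abs_nonneg _) (hg t)
      _ ≤ _ := sum_abs_sub_le_two_mul_one_sub_dobrushin hA1 u v
  calc ∑ t, |∑ s, f s * A s t| = ∑ s, f s * ∑ t, A s t * g t := by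
        simp only [hsign, sum_mul, mul_sum, mul_assoc]; exact sum_comm
    _ ≤ 2 * (1 - dobrushin A) / 2 * ∑ s, |f s| := sum_mul_le_of_sum_eq_zero hf hosc
    _ = (1 - dobrushin A) * ∑ s, |f s| := by ring

end Dobrushin

section Perturbation

variable {S : Type*} [Fintype S]

lemma vecMul_mem_stdSimplex {μ : S → ℝ} (hμ : μ ∈ stdSimplex ℝ S) {B : S → S → ℝ}
    (hB0 : ∀ s t, 0 ≤ B s t) (hB1 : ∀ s, ∑ t, B s t = 1) :
    (fun t => ∑ s, μ s * B s t) ∈ stdSimplex ℝ S :=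
  ⟨fun t => sum_nonneg fun s _ => mul_nonneg (hμ.1 s) (hB0 s t), by
    rw [sum_comm]; simp only [← mul_sum, hB1, mul_one, hμ.2]⟩

lemma sum_abs_vecMul_le_card_mul {E : S → S → ℝ} {τ : ℝ} (hE : ∀ s t, |E s t| ≤ τ)
    (μ : S → ℝ) : ∑ t, |∑ s, μ s * E s t| ≤ Fintype.card S * τ * ∑ s, |μ s| :=
  calc ∑ t, |∑ s, μ s * E s t| ≤ ∑ _t : S, ∑ s, |μ s| * τ := sum_le_sum fun t _ =>
        (abs_sum_le_sum_abs _ _).trans <| sum_le_sum fun s _ => by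
          rw [abs_mul]; exact mul_le_mul_of_nonneg_left (hE s t) (abs_nonneg _)
    _ = Fintype.card S * τ * ∑ s, |μ s| := by
        rw [sum_const, card_univ, nsmul_eq_mul, ← sum_mul]; ring

variable [Nonempty S] {A : S → S → ℝ}

lemma sum_abs_vecMul_sub_stationary_le (hA1 : ∀ s, ∑ t, A s t = 1) {ν : S → ℝ}
    (hν1 : ∑ s, ν s = 1) (hstat : ∀ t, ∑ s, ν s * A s t = ν t) {μ : S → ℝ}
    (hμ : μ ∈ stdSimplex ℝ S) {B : S → S → ℝ} {τ : ℝ} (hB : ∀ s t, |B s t - A s t| ≤ τ) :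
    ∑ t, |∑ s, μ s * B s t - ν t|
      ≤ (1 - dobrushin A) * ∑ s, |μ s - ν s| + Fintype.card S * τ := by
  have hsplit : ∀ t, ∑ s, μ s * B s t - ν t
      = ∑ s, μ s * (B s t - A s t) + ∑ s, (μ s - ν s) * A s t := fun t => by
    rw [← hstat t, ← sum_sub_distrib, ← sum_add_distrib]
    exact sum_congr rfl fun s _ => by ring
  have hcontr := sum_abs_vecMul_le_of_sum_eq_zero hA1 (f := fun s => μ s - ν s)
    (by rw [sum_sub_distrib, hμ.2, hν1, sub_self])
  have hpert := sum_abs_vecMul_le_card_mul hB μ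
  rw [sum_congr rfl fun s _ => abs_of_nonneg (hμ.1 s), hμ.2, mul_one] at hpert
  calc _ ≤ ∑ t, (|∑ s, μ s * (B s t - A s t)| + |∑ s, (μ s - ν s) * A s t|) :=
        sum_le_sum fun t _ => (hsplit t).symm ▸ abs_add_le _ _
    _ ≤ _ := by rw [sum_add_distrib]; linarith

end Perturbation

lemma limsup_le_of_le_mul_add {d : ℕ → ℝ} {q r : ℝ} (hd : ∀ k, 0 ≤ d k) (hq0 : 0 ≤ q)
    (hq1 : q < 1) (h : ∀ k, d (k + 1) ≤ q * d k + (1 - q) * r) :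
    limsup d atTop ≤ r := by
  have hbound : ∀ k, d k ≤ r + q ^ k * (d 0 - r) := fun k => by
    induction k with
    | zero => simp
    | succ k ih =>
      calc d (k + 1) ≤ q * (r + q ^ k * (d 0 - r)) + (1 - q) * r :=
            (h k).trans (by gcongr)
        _ = r + q ^ (k + 1) * (d 0 - r) := by ring
  have hlim : Tendsto (fun k => r + q ^ k * (d 0 - r)) atTop (𝓝 r) := by
    simpa using tendsto_const_nhds.add
      ((tendsto_pow_atTop_nhds_zero_of_lt_one hq0 hq1).mul_const (d 0 - r))
  calc limsup d atTop ≤ limsup (fun k => r + q ^ k * (d 0 - r)) atTop :=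
        limsup_le_limsup (Eventually.of_forall hbound)
          (isCoboundedUnder_le_of_le atTop hd) hlim.isBoundedUnder_le
    _ = r := hlim.limsup_eq

theorem perturbed_products_close_to_stationary_general
    {S : Type*} [Fintype S] [Nonempty S]
    (A : S → S → ℝ) (hA1 : ∀ s, ∑ t, A s t = 1)
    (hσ : 0 < dobrushin A)
    (Ak : ℕ → S → S → ℝ)
    (hAk0 : ∀ k s t, 0 ≤ Ak k s t) (hAk1 : ∀ k s, ∑ t, Ak k s t = 1)
    (ε : ℝ) (hε : ε ∈ Set.Ioo (0 : ℝ) 1)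
    (τ : ℝ) (hτ : τ = dobrushin A * ε / (2 * (Fintype.card S : ℝ)))
    (hclose : ∀ k s t, |Ak k s t - A s t| ≤ τ)
    (μstar : S → ℝ) (hμstar1 : ∑ s, μstar s = 1)
    (hstat : ∀ s', ∑ s, μstar s * A s s' = μstar s')
    (μ0 : S → ℝ) (hμ00 : ∀ s, 0 ≤ μ0 s) (hμ01 : ∑ s, μ0 s = 1)
    (seq : ℕ → S → ℝ) (hseq0 : seq 0 = μ0)
    (hseq : ∀ k, seq (k + 1) = fun s' => ∑ s, seq k s * Ak k s s') :
    Filter.limsup (fun k : ℕ => ∑ s, |seq (k + 1) s - μstar s|) Filter.atTop ≤ ε := by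
  have hprob : ∀ k, seq k ∈ stdSimplex ℝ S := fun k => by
    induction k with
    | zero => exact hseq0 ▸ ⟨hμ00, hμ01⟩
    | succ k ih => exact hseq k ▸ vecMul_mem_stdSimplex ih (hAk0 k) (hAk1 k)
  have hcard : (Fintype.card S : ℝ) * τ = (1 - (1 - dobrushin A)) * (ε / 2) := by
    have : (0 : ℝ) < Fintype.card S := Nat.cast_pos.2 Fintype.card_pos
    rw [hτ]; field_simp; ring
  have hstep : ∀ k, ∑ s, |seq (k + 2) s - μstar s|
      ≤ (1 - dobrushin A) * ∑ s, |seq (k + 1) s - μstar s| + (1 - (1 - dobrushin A)) * (ε / 2) :=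
    fun k => hseq (k + 1) ▸ hcard ▸
      sum_abs_vecMul_sub_stationary_le hA1 hμstar1 hstat (hprob (k + 1)) (hclose (k + 1))
  calc _ ≤ ε / 2 := limsup_le_of_le_mul_add (fun k => sum_nonneg fun s _ => abs_nonneg _)
        (by linarith [dobrushin_le_one hA1]) (by linarith) hstep
    _ ≤ ε := by linarith [hε.1]

/-- Lemma 3 (Appendix A): let `A` be an `n × n` row-stochastic matrix with `σ(A) > 0`
and `{A_k}` a sequence of row-stochastic matrices with
`sup_k ‖A_k − A‖∞ ≤ τ := σ(A) ε / (2n)` for some `ε ∈ (0,1)`. Then for any probability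
vector `μ₀`, `limsup_k ‖μ₀ A₀ ⋯ A_k − μ*‖₁ ≤ ε`, where `μ*` is the unique probability
vector with `μ* = μ* A`. (Here `seq (k+1) = μ₀ A₀ ⋯ A_k`.) -/
theorem perturbed_products_close_to_stationary
    {S : Type*} [Fintype S] [Nonempty S]
    (A : S → S → ℝ) (hA0 : ∀ s t, 0 ≤ A s t) (hA1 : ∀ s, ∑ t, A s t = 1)
    (hσ : 0 < dobrushin A)
    (Ak : ℕ → S → S → ℝ)
    (hAk0 : ∀ k s t, 0 ≤ Ak k s t) (hAk1 : ∀ k s, ∑ t, Ak k s t = 1)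
    (ε : ℝ) (hε : ε ∈ Set.Ioo (0 : ℝ) 1)
    (τ : ℝ) (hτ : τ = dobrushin A * ε / (2 * (Fintype.card S : ℝ)))
    (hclose : ∀ k s t, |Ak k s t - A s t| ≤ τ)
    (μstar : S → ℝ) (hμstar0 : ∀ s, 0 ≤ μstar s) (hμstar1 : ∑ s, μstar s = 1)
    (hstat : ∀ s', ∑ s, μstar s * A s s' = μstar s')
    (hstat_unique : ∀ ν : S → ℝ, (∀ s, 0 ≤ ν s) → (∑ s, ν s = 1) →
      (∀ s', ∑ s, ν s * A s s' = ν s') → ν = μstar)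
    (μ0 : S → ℝ) (hμ00 : ∀ s, 0 ≤ μ0 s) (hμ01 : ∑ s, μ0 s = 1)
    (seq : ℕ → S → ℝ) (hseq0 : seq 0 = μ0)
    (hseq : ∀ k, seq (k + 1) = fun s' => ∑ s, seq k s * Ak k s s') :
    Filter.limsup (fun k : ℕ => ∑ s, |seq (k + 1) s - μstar s|) Filter.atTop ≤ ε :=
  perturbed_products_close_to_stationary_general A hA1 hσ Ak hAk0 hAk1 ε hε τ hτ hclose μstar
    hμstar1 hstat μ0 hμ00 hμ01 seq hseq0 hseq
end

section
/- Let A be a row-stochastic matrix on a finite set S, let T ⊆ S be nonempty, and let g ∈ [0,1) and p ∈ (0,1] satisfy: A(s,T) ≥ 1 − g for every s ∈ T, and A(s,T) ≥ p for every s ∉ T. Then every probability vector μ with μ = μA satisfies μ(T) ≥ p/(p + g). -/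
/-- Let `A` be a row-stochastic matrix on a finite set `S`, `T ⊆ S` nonempty,
`g ∈ [0,1)` and `p ∈ (0,1]` with `A(s,T) ≥ 1 − g` for all `s ∈ T` and `A(s,T) ≥ p`
for all `s ∉ T`. Then every stationary probability vector `μ = μA` satisfies
`μ(T) ≥ p/(p+g)`. -/
theorem stationary_mass_lower_bound {S : Type*} [Fintype S]
    (A : S → S → ℝ) (hA0 : ∀ s t, 0 ≤ A s t) (hA1 : ∀ s, ∑ t, A s t = 1)
    (T : Finset S) (hT : T.Nonempty)
    (g p : ℝ) (hg : g ∈ Set.Ico (0 : ℝ) 1) (hp : p ∈ Set.Ioc (0 : ℝ) 1)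
    (hin : ∀ s ∈ T, 1 - g ≤ ∑ t ∈ T, A s t)
    (hout : ∀ s ∉ T, p ≤ ∑ t ∈ T, A s t)
    (μ : S → ℝ) (hμ0 : ∀ s, 0 ≤ μ s) (hμ1 : ∑ s, μ s = 1)
    (hstat : ∀ s', ∑ s, μ s * A s s' = μ s') :
    p / (p + g) ≤ ∑ s ∈ T, μ s := by
  classical
  obtain ⟨hg0, hg1⟩ := hg
  obtain ⟨hp0, hp1⟩ := hp
  set m : ℝ := ∑ s ∈ T, μ s with hm
  have hmc : ∑ s ∈ Tᶜ, μ s = 1 - m := by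
    have := Finset.sum_add_sum_compl T μ
    rw [hμ1] at this; linarith
  have hsum : m = ∑ s, μ s * ∑ t ∈ T, A s t := by
    simp_rw [Finset.mul_sum]
    rw [Finset.sum_comm]
    simp [hstat, hm]
  have hsplit : m = (∑ s ∈ T, μ s * ∑ t ∈ T, A s t)
      + ∑ s ∈ Tᶜ, μ s * ∑ t ∈ T, A s t := by
    rw [hsum, ← Finset.sum_add_sum_compl T]
  have h1 : ∑ s ∈ T, μ s * (1 - g) ≤ ∑ s ∈ T, μ s * ∑ t ∈ T, A s t :=
    Finset.sum_le_sum fun s hs => mul_le_mul_of_nonneg_left (hin s hs) (hμ0 s)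
  have h2 : ∑ s ∈ Tᶜ, μ s * p ≤ ∑ s ∈ Tᶜ, μ s * ∑ t ∈ T, A s t :=
    Finset.sum_le_sum fun s hs =>
      mul_le_mul_of_nonneg_left (hout s (Finset.mem_compl.mp hs)) (hμ0 s)
  have h1' : (∑ s ∈ T, μ s * (1 - g)) = m * (1 - g) := by
    rw [← Finset.sum_mul]
  have h2' : (∑ s ∈ Tᶜ, μ s * p) = (1 - m) * p := by
    rw [← Finset.sum_mul, hmc]
  have hkey : m * (1 - g) + (1 - m) * p ≤ m := by
    rw [← h1', ← h2']; linarith [h1, h2, hsplit]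
  rw [div_le_iff₀ (by linarith)]
  nlinarith
end

section
/- Let A be a row-stochastic matrix on a finite set S, let E ⊆ S be nonempty, and let m ∈ [0,1], p ∈ (0,1], and L ∈ ℕ with L ≥ 1 satisfy: A(s,E) ≥ 1 − m for every s ∈ E, and (A^L)(s,E) ≥ p for every s ∈ S. Then for every probability vector μ on S and every j ∈ ℕ, (μ A^{jL})(S∖E) ≤ L·m/p + (1 − p)^j. -/
/-- Let `A` be a row-stochastic matrix on a finite set `S`, `E ⊆ S` nonempty,
`m ∈ [0,1]`, `p ∈ (0,1]`, `L ≥ 1`, with `A(s,E) ≥ 1 − m` for every `s ∈ E` and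
`(A^L)(s,E) ≥ p` for every `s ∈ S`. Then for every probability vector `μ` and every
`j ∈ ℕ`, `(μ A^{jL})(S∖E) ≤ L m / p + (1 − p)^j`. -/
theorem escape_probability_bound {S : Type*} [Fintype S] [DecidableEq S]
    (A : Matrix S S ℝ) (hA0 : ∀ s t, 0 ≤ A s t) (hA1 : ∀ s, ∑ t, A s t = 1)
    (E : Finset S) (hE : E.Nonempty)
    (m p : ℝ) (hm : m ∈ Set.Icc (0 : ℝ) 1) (hp : p ∈ Set.Ioc (0 : ℝ) 1)
    (L : ℕ) (hL : 1 ≤ L)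
    (hstay : ∀ s ∈ E, 1 - m ≤ ∑ t ∈ E, A s t)
    (hreach : ∀ s : S, p ≤ ∑ t ∈ E, (A ^ L) s t)
    (μ : S → ℝ) (hμ0 : ∀ s, 0 ≤ μ s) (hμ1 : ∑ s, μ s = 1) :
    ∀ j : ℕ,
      ∑ s ∈ Finset.univ \ E, Matrix.vecMul μ (A ^ (j * L)) s ≤
        (L : ℝ) * m / p + (1 - p) ^ j := by
  obtain ⟨hm0, hm1⟩ := hm
  obtain ⟨hp0, hp1⟩ := hp
  have hpow0 : ∀ k : ℕ, ∀ s t, 0 ≤ (A ^ k) s t := by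
    intro k
    induction k with
    | zero =>
      intro s t
      simp only [pow_zero, Matrix.one_apply]
      split <;> norm_num
    | succ n ih =>
      intro s t
      rw [pow_succ, Matrix.mul_apply]
      exact Finset.sum_nonneg fun u _ => mul_nonneg (ih s u) (hA0 u t)
  have hpow1 : ∀ k : ℕ, ∀ s, ∑ t, (A ^ k) s t = 1 := by
    intro k
    induction k with
    | zero => intro s; simp [Matrix.one_apply]
    | succ n ih =>
      intro s
      rw [pow_succ]
      simp only [Matrix.mul_apply]
      rw [Finset.sum_comm]
      calc ∑ u, ∑ t, (A ^ n) s u * A u t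
          = ∑ u, (A ^ n) s u * ∑ t, A u t := by
            simp [Finset.mul_sum]
        _ = 1 := by simp [hA1, ih s]
  -- sum over a subset is at most 1
  have hsub1 : ∀ k : ℕ, ∀ s, ∀ T : Finset S, ∑ t ∈ T, (A ^ k) s t ≤ 1 := by
    intro k s T
    rw [← hpow1 k s]
    exact Finset.sum_le_sum_of_subset_of_nonneg (Finset.subset_univ T)
      (fun t _ _ => hpow0 k s t)
  -- escape from E in k steps bounded by k*m
  have hleave : ∀ k : ℕ, ∀ s ∈ E, ∑ t ∈ Finset.univ \ E, (A ^ k) s t ≤ k * m := by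
    intro k
    induction k with
    | zero =>
      intro s hs
      have : ∑ t ∈ Finset.univ \ E, (A ^ 0) s t = 0 := by
        apply Finset.sum_eq_zero
        intro t ht
        rw [Finset.mem_sdiff] at ht
        have hst : s ≠ t := fun h => ht.2 (h ▸ hs)
        simp [Matrix.one_apply, hst]
      rw [this]; simp
    | succ n ih =>
      intro s hs
      have hsplit : ∑ t ∈ Finset.univ \ E, (A ^ (n + 1)) s t
          = ∑ u, A s u * ∑ t ∈ Finset.univ \ E, (A ^ n) u t := by
        rw [pow_succ']
        simp only [Matrix.mul_apply]
        rw [Finset.sum_comm]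
        simp [Finset.mul_sum, mul_sub, Finset.sum_sub_distrib]
      rw [hsplit]
      have husplit : ∑ u, A s u * ∑ t ∈ Finset.univ \ E, (A ^ n) u t
          = ∑ u ∈ E, A s u * ∑ t ∈ Finset.univ \ E, (A ^ n) u t
            + ∑ u ∈ Finset.univ \ E, A s u * ∑ t ∈ Finset.univ \ E, (A ^ n) u t := by
        rw [← Finset.sum_sdiff (Finset.subset_univ E)]
        ring
      rw [husplit]
      have h1 : ∑ u ∈ E, A s u * ∑ t ∈ Finset.univ \ E, (A ^ n) u t ≤ n * m := by
        calc ∑ u ∈ E, A s u * ∑ t ∈ Finset.univ \ E, (A ^ n) u t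
            ≤ ∑ u ∈ E, A s u * (n * m) := by
              apply Finset.sum_le_sum
              intro u hu
              exact mul_le_mul_of_nonneg_left (ih u hu) (hA0 s u)
          _ = (∑ u ∈ E, A s u) * (n * m) := by rw [Finset.sum_mul]
          _ ≤ 1 * (n * m) := by
              apply mul_le_mul_of_nonneg_right _ (by positivity)
              rw [← hA1 s]
              exact Finset.sum_le_sum_of_subset_of_nonneg (Finset.subset_univ E)
                (fun t _ _ => hA0 s t)
          _ = n * m := one_mul _
      have h2 : ∑ u ∈ Finset.univ \ E, A s u * ∑ t ∈ Finset.univ \ E, (A ^ n) u t ≤ m := by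
        calc ∑ u ∈ Finset.univ \ E, A s u * ∑ t ∈ Finset.univ \ E, (A ^ n) u t
            ≤ ∑ u ∈ Finset.univ \ E, A s u * 1 := by
              apply Finset.sum_le_sum
              intro u hu
              exact mul_le_mul_of_nonneg_left (hsub1 n u _) (hA0 s u)
          _ = ∑ u ∈ Finset.univ \ E, A s u := by simp
          _ = (∑ u, A s u) - ∑ u ∈ E, A s u := by
              rw [eq_sub_iff_add_eq, Finset.sum_sdiff (Finset.subset_univ E)]
          _ ≤ 1 - (1 - m) := by
              rw [hA1 s]
              have := hstay s hs
              linarith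
          _ = m := by ring
      push_cast
      linarith
  -- one L-block step for a probability vector ν
  have hstep : ∀ ν : S → ℝ, (∀ s, 0 ≤ ν s) → (∑ s, ν s = 1) →
      ∑ t ∈ Finset.univ \ E, Matrix.vecMul ν (A ^ L) t
        ≤ (L : ℝ) * m + (1 - p) * ∑ t ∈ Finset.univ \ E, ν t := by
    intro ν hν0 hν1
    have hswap : ∑ t ∈ Finset.univ \ E, Matrix.vecMul ν (A ^ L) t
        = ∑ s, ν s * ∑ t ∈ Finset.univ \ E, (A ^ L) s t := by
      simp only [Matrix.vecMul, dotProduct]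
      rw [Finset.sum_comm]
      simp [Finset.mul_sum, mul_sub, Finset.sum_sub_distrib]
    rw [hswap]
    rw [← Finset.sum_sdiff (Finset.subset_univ E)]
    have h1 : ∑ s ∈ E, ν s * ∑ t ∈ Finset.univ \ E, (A ^ L) s t ≤ (L : ℝ) * m := by
      calc ∑ s ∈ E, ν s * ∑ t ∈ Finset.univ \ E, (A ^ L) s t
          ≤ ∑ s ∈ E, ν s * ((L : ℝ) * m) := by
            apply Finset.sum_le_sum
            intro s hsE
            exact mul_le_mul_of_nonneg_left (hleave L s hsE) (hν0 s)
        _ = (∑ s ∈ E, ν s) * ((L : ℝ) * m) := by rw [Finset.sum_mul]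
        _ ≤ 1 * ((L : ℝ) * m) := by
            apply mul_le_mul_of_nonneg_right _ (by positivity)
            rw [← hν1]
            exact Finset.sum_le_sum_of_subset_of_nonneg (Finset.subset_univ E)
              (fun t _ _ => hν0 t)
        _ = (L : ℝ) * m := one_mul _
    have h2 : ∑ s ∈ Finset.univ \ E, ν s * ∑ t ∈ Finset.univ \ E, (A ^ L) s t
        ≤ (1 - p) * ∑ t ∈ Finset.univ \ E, ν t := by
      rw [Finset.mul_sum]
      apply Finset.sum_le_sum
      intro s _
      rw [mul_comm (1 - p) (ν s)]
      apply mul_le_mul_of_nonneg_left _ (hν0 s)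
      have : ∑ t ∈ Finset.univ \ E, (A ^ L) s t = (∑ t, (A ^ L) s t) - ∑ t ∈ E, (A ^ L) s t := by
        rw [eq_sub_iff_add_eq, Finset.sum_sdiff (Finset.subset_univ E)]
      rw [this, hpow1 L s]
      have := hreach s
      linarith
    linarith
  -- iterated distributions are probability vectors
  have hdist : ∀ k : ℕ, (∀ s, 0 ≤ Matrix.vecMul μ (A ^ k) s)
      ∧ (∑ s, Matrix.vecMul μ (A ^ k) s = 1) := by
    intro k
    constructor
    · intro s
      simp only [Matrix.vecMul, dotProduct]
      exact Finset.sum_nonneg fun u _ => mul_nonneg (hμ0 u) (hpow0 k u s)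
    · simp only [Matrix.vecMul, dotProduct]
      rw [Finset.sum_comm]
      calc ∑ u, ∑ s, μ u * (A ^ k) u s
          = ∑ u, μ u * ∑ s, (A ^ k) u s := by simp [Finset.mul_sum]
        _ = 1 := by simp [hpow1 k, hμ1]
  intro j
  induction j with
  | zero =>
    have h0 : ∑ s ∈ Finset.univ \ E, Matrix.vecMul μ (A ^ (0 * L)) s ≤ 1 := by
      rw [← (hdist (0 * L)).2]
      exact Finset.sum_le_sum_of_subset_of_nonneg (Finset.subset_univ _)
        (fun t _ _ => (hdist (0 * L)).1 t)
    have : 0 ≤ (L : ℝ) * m / p := by positivity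
    rw [pow_zero]
    linarith
  | succ j ih =>
    have hdec : Matrix.vecMul μ (A ^ ((j + 1) * L))
        = Matrix.vecMul (Matrix.vecMul μ (A ^ (j * L))) (A ^ L) := by
      rw [Matrix.vecMul_vecMul, ← pow_add, add_mul, one_mul]
    rw [hdec]
    have hb := hstep (Matrix.vecMul μ (A ^ (j * L))) (hdist (j * L)).1 (hdist (j * L)).2
    have h1p : 0 ≤ 1 - p := by linarith
    have key : (1 - p) * ∑ t ∈ Finset.univ \ E, Matrix.vecMul μ (A ^ (j * L)) t
        ≤ (1 - p) * ((L : ℝ) * m / p + (1 - p) ^ j) :=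
      mul_le_mul_of_nonneg_left ih h1p
    have halg : (L : ℝ) * m + (1 - p) * ((L : ℝ) * m / p + (1 - p) ^ j)
        = (L : ℝ) * m / p + (1 - p) ^ (j + 1) := by
      field_simp
      ring
    calc ∑ t ∈ Finset.univ \ E, Matrix.vecMul (Matrix.vecMul μ (A ^ (j * L))) (A ^ L) t
        ≤ (L : ℝ) * m + (1 - p) * ∑ t ∈ Finset.univ \ E, Matrix.vecMul μ (A ^ (j * L)) t := hb
      _ ≤ (L : ℝ) * m + (1 - p) * ((L : ℝ) * m / p + (1 - p) ^ j) := by linarith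
      _ = (L : ℝ) * m / p + (1 - p) ^ (j + 1) := halg
end

section
/- Let L ∈ ℕ with L ≥ 1, let p ∈ (0,1], let {a_k}_{k∈ℕ} be a sequence with a_k ∈ [0,1] for all k, and let {c_k}_{k∈ℕ} be a sequence of nonnegative reals such that a_{k+L} ≤ c_k + (1 − p)·a_k for all k ∈ ℕ. Then limsup_{k→∞} a_k ≤ (limsup_{k→∞} c_k)/p. -/
open Filter ENNReal

/-- Let `L ≥ 1`, `p ∈ (0,1]`, `{a_k}` a sequence with `a_k ∈ [0,1]`, and `{c_k}`
nonnegative reals with `a_{k+L} ≤ c_k + (1 − p) a_k` for all `k`. Then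
`limsup_k a_k ≤ (limsup_k c_k)/p` (limsups taken in `[0,∞]`). -/
theorem limsup_bound_of_L_step_recursion
    (L : ℕ) (hL : 1 ≤ L) (p : ℝ) (hp : p ∈ Set.Ioc (0 : ℝ) 1)
    (a c : ℕ → ℝ) (ha : ∀ k, a k ∈ Set.Icc (0 : ℝ) 1) (hc : ∀ k, 0 ≤ c k)
    (hrec : ∀ k, a (k + L) ≤ c k + (1 - p) * a k) :
    Filter.limsup (fun k => ENNReal.ofReal (a k)) Filter.atTop ≤
      Filter.limsup (fun k => ENNReal.ofReal (c k)) Filter.atTop / ENNReal.ofReal p := by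
  obtain ⟨hp0, hp1⟩ := hp
  set C : ℝ≥0∞ := Filter.limsup (fun k => ENNReal.ofReal (c k)) Filter.atTop with hC
  by_cases hCtop : C = ⊤
  · rw [hCtop, ENNReal.top_div_of_ne_top (by simp)]
    exact le_top
  -- real limsup of a
  set A : ℝ := Filter.limsup a Filter.atTop with hA
  have hbddA : IsBoundedUnder (· ≤ ·) atTop a :=
    isBoundedUnder_of ⟨1, fun k => (ha k).2⟩
  have hcobddA : IsCoboundedUnder (· ≤ ·) atTop a :=
    (isBoundedUnder_of ⟨0, fun k => (ha k).1⟩ :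
      IsBoundedUnder (· ≥ ·) atTop a).isCoboundedUnder_le
  set Cr : ℝ := C.toReal with hCr
  -- key: p * A ≤ Cr
  have key : p * A ≤ Cr := by
    refine le_of_forall_pos_le_add fun ε hε => ?_
    -- eventually c k ≤ Cr + ε
    have hev : ∀ᶠ k in atTop, c k ≤ Cr + ε := by
      have hlt : C < C + ENNReal.ofReal ε := by
        apply ENNReal.lt_add_right hCtop
        simpa using hε
      filter_upwards [Filter.eventually_lt_of_limsup_lt hlt] with k hk
      have hk' : (ENNReal.ofReal (c k)).toReal ≤ (C + ENNReal.ofReal ε).toReal :=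
        ENNReal.toReal_mono (by simp [hCtop, ENNReal.add_ne_top]) hk.le
      rwa [ENNReal.toReal_ofReal (hc k), ENNReal.toReal_add hCtop (by simp),
        ENNReal.toReal_ofReal hε.le] at hk'
    -- limsup of shifted sequence equals A
    have hshift : Filter.limsup (fun k => a (k + L)) Filter.atTop = A := by
      have hcomp : (fun k => a (k + L)) = a ∘ (fun k => k + L) := rfl
      rw [hA, Filter.limsup, Filter.limsup, hcomp, ← Filter.map_map,
        Filter.map_add_atTop_eq_nat]
    have hb1 : IsBoundedUnder (· ≤ ·) atTop (fun k => (1 - p) * a k) :=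
      isBoundedUnder_of ⟨1 - p, fun k => by
        nlinarith [(ha k).1, (ha k).2]⟩
    have hcb1 : IsCoboundedUnder (· ≤ ·) atTop (fun k => (1 - p) * a k) :=
      (isBoundedUnder_of ⟨0, fun k => mul_nonneg (by linarith) (ha k).1⟩ :
        IsBoundedUnder (· ≥ ·) atTop (fun k => (1 - p) * a k)).isCoboundedUnder_le
    have hmul : Filter.limsup (fun k => (1 - p) * a k) Filter.atTop = (1 - p) * A := by
      have := (Monotone.map_limsup_of_continuousAt (F := atTop)
        (f := fun x : ℝ => (1 - p) * x)
        (fun x y hxy => mul_le_mul_of_nonneg_left hxy (by linarith)) a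
        (by fun_prop) hbddA hcobddA)
      exact this.symm
    have step1 : A ≤ Filter.limsup (fun k => (Cr + ε) + (1 - p) * a k) Filter.atTop := by
      rw [← hshift]
      refine Filter.limsup_le_limsup ?_ ?_ ?_
      · filter_upwards [hev] with k hk
        calc a (k + L) ≤ c k + (1 - p) * a k := hrec k
          _ ≤ (Cr + ε) + (1 - p) * a k := by linarith
      · exact (isBoundedUnder_of ⟨0, fun k => (ha (k + L)).1⟩ :
          IsBoundedUnder (· ≥ ·) atTop (fun k => a (k + L))).isCoboundedUnder_le
      · exact isBoundedUnder_of ⟨(Cr + ε) + (1 - p), fun k => by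
          nlinarith [(ha k).1, (ha k).2]⟩
    have step2 : Filter.limsup (fun k => (Cr + ε) + (1 - p) * a k) Filter.atTop
        = (Cr + ε) + (1 - p) * A := by
      rw [limsup_const_add atTop (fun k => (1 - p) * a k) (Cr + ε) hb1 hcb1, hmul]
    have : A ≤ (Cr + ε) + (1 - p) * A := step1.trans_eq step2
    nlinarith
  have hACr : A ≤ Cr / p := by
    rw [le_div_iff₀ hp0]; linarith [key]
  -- conclude in ENNReal
  have hCr0 : 0 ≤ Cr := ENNReal.toReal_nonneg
  have hfin : C / ENNReal.ofReal p ≠ ⊤ := by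
    simp [ENNReal.div_eq_top, hCtop, (ENNReal.ofReal_pos.2 hp0).ne']
  refine ENNReal.le_of_forall_pos_le_add fun ε hε _ => ?_
  have hε' : (0:ℝ) < ε := hε
  have hev2 : ∀ᶠ k in atTop, a k < A + (ε:ℝ) :=
    Filter.eventually_lt_of_limsup_lt (lt_add_of_pos_right A hε') hbddA
  have : Filter.limsup (fun k => ENNReal.ofReal (a k)) Filter.atTop
      ≤ ENNReal.ofReal (A + (ε:ℝ)) := by
    refine Filter.limsup_le_of_le (by isBoundedDefault) ?_
    filter_upwards [hev2] with k hk
    exact ENNReal.ofReal_le_ofReal hk.le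
  refine this.trans ?_
  have h1 : ENNReal.ofReal (A + (ε:ℝ)) ≤ ENNReal.ofReal (Cr / p) + ENNReal.ofReal (ε:ℝ) :=
    (ENNReal.ofReal_le_ofReal (by linarith)).trans (ENNReal.ofReal_add_le)
  have h2 : ENNReal.ofReal (Cr / p) = C / ENNReal.ofReal p := by
    rw [ENNReal.ofReal_div_of_pos hp0, hCr, ENNReal.ofReal_toReal hCtop]
  rw [h2, ENNReal.ofReal_coe_nnreal] at h1
  exact h1
end

section
/- Let N ≥ 1 and let Π¹, …, Πᴺ be finite nonempty sets with product Π := Π¹ × ⋯ × Πᴺ. For each i, let λⁱ ∈ [0,1], let γⁱ, κⁱ ∈ (0,1), let BRⁱ be a map assigning to each π⁻ⁱ ∈ Π⁻ⁱ := ∏_{j≠i} Πʲ a nonempty subset of Πⁱ, and let hⁱ(· | πⁱ, Bⁱ) be a probability distribution on Πⁱ for each πⁱ ∈ Πⁱ and Bⁱ ⊆ Πⁱ. Define R^{i,λⁱ}(π̃ⁱ | πⁱ, Bⁱ) := 1 if πⁱ ∈ Bⁱ and π̃ⁱ = πⁱ; := λⁱ if πⁱ ∉ Bⁱ and π̃ⁱ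 = πⁱ; := (1 − λⁱ)/|Bⁱ| if πⁱ ∉ Bⁱ and π̃ⁱ ∈ Bⁱ; := 0 otherwise. Let T ⊆ Π be nonempty and suppose that π ∈ T implies πⁱ ∈ BRⁱ(π⁻ⁱ) for every i. Define a row-stochastic matrix A on Π by A(π, π̃) := ∏_{i=1}^N ν^i_π(π̃ⁱ), where ν^i_π := (1 − γⁱ)·R^{i,λⁱ}(· | πⁱ, BRⁱ(π⁻ⁱ)) + γⁱ·Unif(Πⁱ) if π ∈ T, and ν^i_π := (1 − κⁱ)·hⁱ(· | πⁱ, BRⁱ(π⁻ⁱ)) + κⁱ·Unif(Πⁱ) if π ∉ T. Then A has a unique stationary distribution μ* (i.e., μ* = μ*A), this μ* satisfies μ*(T) ≥ 1 − (Σ_{i=1}^N γⁱ)/(Σ_{i=1}^N γⁱ + ∏_{i=1}^N κⁱ/|Πⁱ|), and μ₀Aⁿ → μ* as n → ∞ for every probability vector μ₀ on Π. -/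
open Finset Filter Topology Matrix

/-!
Every entry of `A` is at least `ε = ∏ᵢ min(γⁱ, κⁱ)/|Πⁱ|`. By Doeblin's argument, `μ ↦ μA` then
contracts the `ℓ¹` distance between probability vectors by the factor `1 - |Π| ε < 1`, and Banach's
fixed point theorem gives the unique stationary `μ*` together with `μ₀Aⁿ → μ*`.

For the mass of `T`: from a profile in `T` every player already best-replies, so the chain stays
put with probability at least `∏ᵢ (1 - γⁱ) ≥ 1 - G` where `G = Σᵢ γⁱ`; from outside `T` it jumps
to any fixed profile of `T` with probability at least `P = ∏ᵢ κⁱ/|Πⁱ|`. Balancing the flow of `μ*`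
into and out of `T` gives `μ*(T) ≥ P/(G + P)`.
-/

/-- The inertial best-reply kernel `R^{i,λ}(· | π, B)`. -/
noncomputable def inertialKernel {α : Type*} [DecidableEq α]
    (lam : ℝ) (p : α) (B : Finset α) : α → ℝ :=
  fun q =>
    if p ∈ B then (if q = p then 1 else 0)
    else if q = p then lam
    else if q ∈ B then (1 - lam) / (B.card : ℝ)
    else 0

theorem one_sub_sum_le_prod_one_sub {ι : Type*} (s : Finset ι) {f : ι → ℝ}
    (h0 : ∀ i ∈ s, 0 ≤ f i) (h1 : ∀ i ∈ s, f i ≤ 1) :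
    1 - ∑ i ∈ s, f i ≤ ∏ i ∈ s, (1 - f i) := by
  classical
  induction s using Finset.induction_on with
  | empty => simp
  | @insert a s ha ih =>
    rw [sum_insert ha, prod_insert ha]
    have ih := ih (fun i hi => h0 i (mem_insert_of_mem hi))
      (fun i hi => h1 i (mem_insert_of_mem hi))
    have hfa : 0 ≤ 1 - f a := sub_nonneg.2 (h1 a (mem_insert_self a s))
    have hs : 0 ≤ ∑ i ∈ s, f i := sum_nonneg fun i hi => h0 i (mem_insert_of_mem hi)
    nlinarith [mul_le_mul_of_nonneg_left ih hfa, h0 a (mem_insert_self a s)]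

section StochasticMatrix

variable {S : Type*} [Fintype S] {A : Matrix S S ℝ} {ε : ℝ}

theorem vecMul_mem_stdSimplex_s13 (hA : ∀ p q, 0 ≤ A p q) (hrow : ∀ p, ∑ q, A p q = 1)
    {μ : S → ℝ} (hμ : μ ∈ stdSimplex ℝ S) : μ ᵥ* A ∈ stdSimplex ℝ S := by
  refine ⟨fun q => sum_nonneg fun p _ => mul_nonneg (hμ.1 p) (hA p q), ?_⟩
  simp only [vecMul, dotProduct]
  rw [sum_comm]
  simp [← mul_sum, hrow, hμ.2]

theorem sum_abs_vecMul_le_of_sum_eq_zero_s13 (hAε : ∀ p q, ε ≤ A p q)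
    (hrow : ∀ p, ∑ q, A p q = 1) {σ : S → ℝ} (hσ : ∑ p, σ p = 0) :
    ∑ q, |(σ ᵥ* A) q| ≤ (1 - Fintype.card S * ε) * ∑ p, |σ p| := by
  -- Since `∑ σ = 0`, lowering every entry of `A` by `ε` does not change `σ A`.
  have hshift : ∀ q, (σ ᵥ* A) q = ∑ p, σ p * (A p q - ε) := fun q => by
    simp only [vecMul, dotProduct, mul_sub, sum_sub_distrib, ← sum_mul, hσ, zero_mul, sub_zero]
  calc ∑ q, |(σ ᵥ* A) q| ≤ ∑ q, ∑ p, |σ p| * (A p q - ε) := by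
        refine sum_le_sum fun q _ => (hshift q ▸ abs_sum_le_sum_abs _ _).trans ?_
        simp only [abs_mul, abs_of_nonneg (sub_nonneg.2 (hAε _ q)), le_refl]
    _ = ∑ p, |σ p| * ∑ q, (A p q - ε) := by
        rw [sum_comm]; simp only [mul_sum]
    _ = (1 - Fintype.card S * ε) * ∑ p, |σ p| := by
        simp [sum_sub_distrib, hrow, mul_sum, mul_comm]

variable (S) in
/-- Probability vectors with the `ℓ¹` distance, for which (unlike the sup distance) a Doeblin
minorization makes `μ ↦ μ A` a contraction. -/
abbrev L1Simplex : Type _ := {x : WithLp 1 (S → ℝ) // x.ofLp ∈ stdSimplex ℝ S}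

namespace L1Simplex

def ofSimplex {μ : S → ℝ} (hμ : μ ∈ stdSimplex ℝ S) : L1Simplex S := ⟨WithLp.toLp 1 μ, hμ⟩

def toFun (x : L1Simplex S) : S → ℝ := x.1.ofLp

theorem toFun_ofSimplex {μ : S → ℝ} (hμ : μ ∈ stdSimplex ℝ S) : (ofSimplex hμ).toFun = μ := rfl

theorem continuous_toFun : Continuous (toFun : L1Simplex S → S → ℝ) :=
  (PiLp.continuous_ofLp 1 _).comp continuous_subtype_val

theorem dist_eq (x y : L1Simplex S) : dist x y = ∑ p, |x.toFun p - y.toFun p| := by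
  rw [Subtype.dist_eq, PiLp.dist_eq_of_L1]
  rfl

instance : CompleteSpace (L1Simplex S) :=
  ((isClosed_stdSimplex ℝ S).preimage (PiLp.continuous_ofLp 1 _)).completeSpace_coe

instance [Nonempty S] : Nonempty (L1Simplex S) := by
  classical
  exact ⟨ofSimplex (single_mem_stdSimplex ℝ (Classical.arbitrary S))⟩

variable (A) in
def vecMul (hA : ∀ p q, 0 ≤ A p q) (hrow : ∀ p, ∑ q, A p q = 1) : L1Simplex S → L1Simplex S :=
  fun x => ofSimplex (vecMul_mem_stdSimplex_s13 hA hrow x.2)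

theorem toFun_iterate_vecMul (hA : ∀ p q, 0 ≤ A p q) (hrow : ∀ p, ∑ q, A p q = 1) (n : ℕ)
    (x : L1Simplex S) : ((vecMul A hA hrow)^[n] x).toFun = (· ᵥ* A)^[n] x.toFun :=
  Function.Semiconj.iterate_right (f := toFun) (fun _ => rfl) n x

theorem contractingWith_vecMul (hε : 0 < ε) (hAε : ∀ p q, ε ≤ A p q)
    (hrow : ∀ p, ∑ q, A p q = 1) [Nonempty S] :
    ContractingWith (1 - Fintype.card S * ε).toNNReal
      (vecMul A (fun p q => hε.le.trans (hAε p q)) hrow) := by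
  refine ⟨by simpa [Real.toNNReal_lt_one] using mul_pos (Nat.cast_pos.2 Fintype.card_pos) hε,
    LipschitzWith.of_dist_le_mul fun x y => ?_⟩
  rw [dist_eq, dist_eq]
  have hσ : ∑ p, (x.toFun - y.toFun) p = 0 := by simp [sum_sub_distrib, toFun, x.2.2, y.2.2]
  calc ∑ q, |(x.toFun ᵥ* A) q - (y.toFun ᵥ* A) q|
      = ∑ q, |((x.toFun - y.toFun) ᵥ* A) q| := by simp [sub_vecMul]
    _ ≤ (1 - Fintype.card S * ε) * ∑ p, |x.toFun p - y.toFun p| :=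
        sum_abs_vecMul_le_of_sum_eq_zero_s13 hAε hrow hσ
    _ ≤ _ := by gcongr; exact Real.le_coe_toNNReal _

end L1Simplex

theorem exists_unique_stationary_tendsto_of_le (hε : 0 < ε) (hAε : ∀ p q, ε ≤ A p q)
    (hrow : ∀ p, ∑ q, A p q = 1) [Nonempty S] :
    ∃ μ ∈ stdSimplex ℝ S, μ ᵥ* A = μ ∧ (∀ ν ∈ stdSimplex ℝ S, ν ᵥ* A = ν → ν = μ) ∧
      ∀ ν ∈ stdSimplex ℝ S, Tendsto (fun n => (· ᵥ* A)^[n] ν) atTop (𝓝 μ) := by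
  have hF := L1Simplex.contractingWith_vecMul hε hAε hrow
  set μ := ContractingWith.fixedPoint _ hF
  refine ⟨μ.toFun, μ.2, congrArg L1Simplex.toFun hF.fixedPoint_isFixedPt,
    fun ν hν hνA => congrArg L1Simplex.toFun (hF.fixedPoint_unique (x := .ofSimplex hν) ?_),
    fun ν hν => ?_⟩
  · exact Subtype.ext (congrArg (WithLp.toLp 1) hνA)
  · simpa only [Function.comp_def, L1Simplex.toFun_iterate_vecMul,
      L1Simplex.toFun_ofSimplex] using
      (L1Simplex.continuous_toFun.tendsto μ).comp (hF.tendsto_iterate_fixedPoint (.ofSimplex hν))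

theorem div_add_le_sum_of_vecMul_eq {μ : S → ℝ} (hμ : μ ∈ stdSimplex ℝ S)
    (hstat : μ ᵥ* A = μ) (T : Finset S) {a b : ℝ} (hab : 0 < a + b)
    (hstay : ∀ p ∈ T, 1 - a ≤ ∑ q ∈ T, A p q) (henter : ∀ p ∉ T, b ≤ ∑ q ∈ T, A p q) :
    b / (a + b) ≤ ∑ p ∈ T, μ p := by
  classical
  have hcompl : ∑ p ∈ Tᶜ, μ p = 1 - ∑ p ∈ T, μ p := by
    rw [← hμ.2, ← sum_add_sum_compl T μ]; ring
  have hbalance : ∑ q ∈ T, μ q = ∑ p, μ p * ∑ q ∈ T, A p q := by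
    conv_lhs => rw [← hstat]
    simp only [vecMul, dotProduct, mul_sum]
    exact sum_comm
  have hlow : (∑ p ∈ T, μ p) * (1 - a) + (1 - ∑ p ∈ T, μ p) * b ≤ ∑ p ∈ T, μ p := calc
    _ = ∑ p ∈ T, μ p * (1 - a) + ∑ p ∈ Tᶜ, μ p * b := by rw [← hcompl, sum_mul, sum_mul]
    _ ≤ ∑ p ∈ T, μ p * ∑ q ∈ T, A p q + ∑ p ∈ Tᶜ, μ p * ∑ q ∈ T, A p q := by
      gcongr with p hp p hp
      exacts [hμ.1 p, hstay p hp, hμ.1 p, henter p (mem_compl.1 hp)]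
    _ = ∑ p ∈ T, μ p := by rw [sum_add_sum_compl, ← hbalance]
  rw [div_le_iff₀ hab]
  linarith

end StochasticMatrix

section UniformMixture

variable {α : Type*} [Fintype α] {k : α → ℝ}

theorem sum_mix_uniform [Nonempty α] (hk : ∑ q, k q = 1) (t : ℝ) :
    ∑ q, ((1 - t) * k q + t * (1 / (Fintype.card α : ℝ))) = 1 := by
  have hcard : (Fintype.card α : ℝ) ≠ 0 := by exact_mod_cast Fintype.card_ne_zero
  rw [sum_add_distrib, ← mul_sum, hk, sum_const, card_univ, nsmul_eq_mul]
  field_simp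
  ring

theorem div_card_le_mix_uniform {t : ℝ} (ht : t ≤ 1) {q : α} (hk : 0 ≤ k q) :
    t / Fintype.card α ≤ (1 - t) * k q + t * (1 / (Fintype.card α : ℝ)) := by
  rw [mul_one_div, le_add_iff_nonneg_left]
  exact mul_nonneg (sub_nonneg.2 ht) hk

end UniformMixture

section InertialKernel

variable {α : Type*} [DecidableEq α]

theorem inertialKernel_nonneg {lam : ℝ} (hlam : lam ∈ Set.Icc (0 : ℝ) 1) (p : α) (B : Finset α)
    (q : α) : 0 ≤ inertialKernel lam p B q := by
  have : 0 ≤ (1 - lam) / (B.card : ℝ) := div_nonneg (sub_nonneg.2 hlam.2) (Nat.cast_nonneg _)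
  unfold inertialKernel
  split_ifs <;> first | exact zero_le_one | exact le_rfl | exact hlam.1 | exact this

theorem inertialKernel_self_of_mem (lam : ℝ) {p : α} {B : Finset α} (hp : p ∈ B) :
    inertialKernel lam p B p = 1 := by
  simp [inertialKernel, hp]

theorem sum_inertialKernel [Fintype α] (lam : ℝ) (p : α) {B : Finset α} (hB : B.Nonempty) :
    ∑ q, inertialKernel lam p B q = 1 := by
  by_cases hp : p ∈ B
  · simp [inertialKernel, hp]
  · have hsplit : ∀ q, inertialKernel lam p B q =
        (if q = p then lam else 0) + if q ∈ B then (1 - lam) / (B.card : ℝ) else 0 := fun q => by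
      by_cases hq : q = p
      · subst hq; simp [inertialKernel, hp]
      · simp [inertialKernel, hp, hq]
    have hcard : (B.card : ℝ) ≠ 0 := by exact_mod_cast hB.card_pos.ne'
    simp only [hsplit, sum_add_distrib, sum_ite_eq', mem_univ, if_true, sum_ite_mem, univ_inter,
      sum_const, nsmul_eq_mul]
    field_simp
    ring

end InertialKernel

section IdealizedUpdate

variable {N : ℕ} {PI : Fin N → Type*} [∀ i, Fintype (PI i)] [∀ i, DecidableEq (PI i)]
  (lam γ κ : Fin N → ℝ) (BR : ∀ i : Fin N, (∀ j, PI j) → Finset (PI i))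
  (h : ∀ i : Fin N, PI i → Finset (PI i) → PI i → ℝ) (T : Finset (∀ j, PI j))

/-- The law `ν^i_π` of player `i`'s next strategy from the profile `π`. -/
noncomputable def playerLaw (π : ∀ j, PI j) (i : Fin N) (q : PI i) : ℝ :=
  if π ∈ T then
    (1 - γ i) * inertialKernel (lam i) (π i) (BR i π) q + γ i * (1 / (Fintype.card (PI i) : ℝ))
  else
    (1 - κ i) * h i (π i) (BR i π) q + κ i * (1 / (Fintype.card (PI i) : ℝ))

noncomputable def updateMatrix : Matrix (∀ j, PI j) (∀ j, PI j) ℝ :=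
  fun π π' => ∏ i, playerLaw lam γ κ BR h T π i (π' i)

variable {lam γ κ BR h T}

theorem sum_playerLaw [∀ i, Nonempty (PI i)] (hBRne : ∀ i π, (BR i π).Nonempty)
    (hh1 : ∀ i p B, ∑ q, h i p B q = 1) (π : ∀ j, PI j) (i : Fin N) :
    ∑ q, playerLaw lam γ κ BR h T π i q = 1 := by
  unfold playerLaw
  split_ifs
  exacts [sum_mix_uniform (sum_inertialKernel _ _ (hBRne i π)) _, sum_mix_uniform (hh1 i _ _) _]

theorem min_div_card_le_playerLaw (hlam : ∀ i, lam i ∈ Set.Icc (0 : ℝ) 1)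
    (hγ : ∀ i, γ i ∈ Set.Ioo (0 : ℝ) 1) (hκ : ∀ i, κ i ∈ Set.Ioo (0 : ℝ) 1)
    (hh0 : ∀ i p B q, 0 ≤ h i p B q) (π : ∀ j, PI j) (i : Fin N) (q : PI i) :
    min (γ i) (κ i) / Fintype.card (PI i) ≤ playerLaw lam γ κ BR h T π i q := by
  unfold playerLaw
  split_ifs
  · exact (div_le_div_of_nonneg_right (min_le_left _ _) (Nat.cast_nonneg _)).trans
      (div_card_le_mix_uniform (hγ i).2.le (inertialKernel_nonneg (hlam i) _ _ q))
  · exact (div_le_div_of_nonneg_right (min_le_right _ _) (Nat.cast_nonneg _)).trans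
      (div_card_le_mix_uniform (hκ i).2.le (hh0 i _ _ q))

theorem div_card_le_playerLaw_of_notMem (hκ : ∀ i, κ i ∈ Set.Ioo (0 : ℝ) 1)
    (hh0 : ∀ i p B q, 0 ≤ h i p B q) {π : ∀ j, PI j} (hπ : π ∉ T) (i : Fin N) (q : PI i) :
    κ i / Fintype.card (PI i) ≤ playerLaw lam γ κ BR h T π i q := by
  rw [playerLaw, if_neg hπ]
  exact div_card_le_mix_uniform (hκ i).2.le (hh0 i _ _ q)

theorem one_sub_le_playerLaw_self (hγ : ∀ i, γ i ∈ Set.Ioo (0 : ℝ) 1)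
    (hTBR : ∀ π ∈ T, ∀ i, π i ∈ BR i π) {π : ∀ j, PI j} (hπ : π ∈ T) (i : Fin N) :
    1 - γ i ≤ playerLaw lam γ κ BR h T π i (π i) := by
  rw [playerLaw, if_pos hπ, inertialKernel_self_of_mem _ (hTBR π hπ i), mul_one,
    le_add_iff_nonneg_right]
  exact mul_nonneg (hγ i).1.le (by positivity)

theorem sum_updateMatrix [∀ i, Nonempty (PI i)] (hBRne : ∀ i π, (BR i π).Nonempty)
    (hh1 : ∀ i p B, ∑ q, h i p B q = 1) (π : ∀ j, PI j) :
    ∑ π', updateMatrix lam γ κ BR h T π π' = 1 := by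
  simp only [updateMatrix, ← Fintype.prod_sum, sum_playerLaw hBRne hh1,
    prod_const_one]

theorem prod_min_div_card_le_updateMatrix (hlam : ∀ i, lam i ∈ Set.Icc (0 : ℝ) 1)
    (hγ : ∀ i, γ i ∈ Set.Ioo (0 : ℝ) 1) (hκ : ∀ i, κ i ∈ Set.Ioo (0 : ℝ) 1)
    (hh0 : ∀ i p B q, 0 ≤ h i p B q) (π π' : ∀ j, PI j) :
    ∏ i, min (γ i) (κ i) / Fintype.card (PI i) ≤ updateMatrix lam γ κ BR h T π π' :=
  prod_le_prod (fun i _ => div_nonneg (le_min (hγ i).1.le (hκ i).1.le) (Nat.cast_nonneg _))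
    fun i _ => min_div_card_le_playerLaw hlam hγ hκ hh0 π i (π' i)

theorem updateMatrix_nonneg (hlam : ∀ i, lam i ∈ Set.Icc (0 : ℝ) 1)
    (hγ : ∀ i, γ i ∈ Set.Ioo (0 : ℝ) 1) (hκ : ∀ i, κ i ∈ Set.Ioo (0 : ℝ) 1)
    (hh0 : ∀ i p B q, 0 ≤ h i p B q) (π π' : ∀ j, PI j) :
    0 ≤ updateMatrix lam γ κ BR h T π π' :=
  (prod_nonneg fun i _ => div_nonneg (le_min (hγ i).1.le (hκ i).1.le) (Nat.cast_nonneg _)).trans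
    (prod_min_div_card_le_updateMatrix hlam hγ hκ hh0 π π')

theorem one_sub_sum_le_sum_updateMatrix (hlam : ∀ i, lam i ∈ Set.Icc (0 : ℝ) 1)
    (hγ : ∀ i, γ i ∈ Set.Ioo (0 : ℝ) 1) (hκ : ∀ i, κ i ∈ Set.Ioo (0 : ℝ) 1)
    (hh0 : ∀ i p B q, 0 ≤ h i p B q) (hTBR : ∀ π ∈ T, ∀ i, π i ∈ BR i π)
    {π : ∀ j, PI j} (hπ : π ∈ T) :
    1 - ∑ i, γ i ≤ ∑ π' ∈ T, updateMatrix lam γ κ BR h T π π' := calc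
  1 - ∑ i, γ i ≤ ∏ i, (1 - γ i) :=
    one_sub_sum_le_prod_one_sub _ (fun i _ => (hγ i).1.le) fun i _ => (hγ i).2.le
  _ ≤ updateMatrix lam γ κ BR h T π π :=
    prod_le_prod (fun i _ => sub_nonneg.2 (hγ i).2.le)
      fun i _ => one_sub_le_playerLaw_self hγ hTBR hπ i
  _ ≤ ∑ π' ∈ T, updateMatrix lam γ κ BR h T π π' :=
    single_le_sum (fun π' _ => updateMatrix_nonneg hlam hγ hκ hh0 π π') hπ

theorem prod_div_card_le_sum_updateMatrix (hlam : ∀ i, lam i ∈ Set.Icc (0 : ℝ) 1)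
    (hγ : ∀ i, γ i ∈ Set.Ioo (0 : ℝ) 1) (hκ : ∀ i, κ i ∈ Set.Ioo (0 : ℝ) 1)
    (hh0 : ∀ i p B q, 0 ≤ h i p B q) (hTne : T.Nonempty) {π : ∀ j, PI j} (hπ : π ∉ T) :
    ∏ i, κ i / Fintype.card (PI i) ≤ ∑ π' ∈ T, updateMatrix lam γ κ BR h T π π' := by
  obtain ⟨τ, hτ⟩ := hTne
  calc ∏ i, κ i / Fintype.card (PI i) ≤ updateMatrix lam γ κ BR h T π τ :=
        prod_le_prod (fun i _ => div_nonneg (hκ i).1.le (Nat.cast_nonneg _))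
          fun i _ => div_card_le_playerLaw_of_notMem hκ hh0 hπ i (τ i)
    _ ≤ ∑ π' ∈ T, updateMatrix lam γ κ BR h T π π' :=
      single_le_sum (fun π' _ => updateMatrix_nonneg hlam hγ hκ hh0 π π') hτ

end IdealizedUpdate

theorem idealized_update_procedure_general
    {N : ℕ} (PI : Fin N → Type*)
    [∀ i, Fintype (PI i)] [∀ i, Nonempty (PI i)] [∀ i, DecidableEq (PI i)]
    (lam : Fin N → ℝ) (hlam : ∀ i, lam i ∈ Set.Icc (0 : ℝ) 1)
    (γ κ : Fin N → ℝ)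
    (hγ : ∀ i, γ i ∈ Set.Ioo (0 : ℝ) 1) (hκ : ∀ i, κ i ∈ Set.Ioo (0 : ℝ) 1)
    (BR : ∀ i : Fin N, (∀ j, PI j) → Finset (PI i))
    (hBRne : ∀ i π, (BR i π).Nonempty)
    (h : ∀ i : Fin N, PI i → Finset (PI i) → PI i → ℝ)
    (hh0 : ∀ i p B q, 0 ≤ h i p B q) (hh1 : ∀ i p B, ∑ q, h i p B q = 1)
    (T : Finset (∀ j, PI j)) (hTne : T.Nonempty)
    (hTBR : ∀ π ∈ T, ∀ i, π i ∈ BR i π)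
    (A : (∀ j, PI j) → (∀ j, PI j) → ℝ)
    (hA : ∀ π π', A π π' =
      ∏ i, (if π ∈ T then
          (1 - γ i) * inertialKernel (lam i) (π i) (BR i π) (π' i) +
            γ i * (1 / (Fintype.card (PI i) : ℝ))
        else
          (1 - κ i) * h i (π i) (BR i π) (π' i) +
            κ i * (1 / (Fintype.card (PI i) : ℝ)))) :
    ∃ μstar : (∀ j, PI j) → ℝ,
      (∀ π, 0 ≤ μstar π) ∧ (∑ π, μstar π = 1) ∧
      (∀ π', ∑ π, μstar π * A π π' = μstar π') ∧
      (∀ ν : (∀ j, PI j) → ℝ, (∀ π, 0 ≤ ν π) → (∑ π, ν π = 1) →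
        (∀ π', ∑ π, ν π * A π π' = ν π') → ν = μstar) ∧
      (1 - (∑ i, γ i) / ((∑ i, γ i) + ∏ i, κ i / (Fintype.card (PI i) : ℝ)) ≤
        ∑ π ∈ T, μstar π) ∧
      (∀ μ0 : (∀ j, PI j) → ℝ, (∀ π, 0 ≤ μ0 π) → (∑ π, μ0 π = 1) →
        ∀ seq : ℕ → (∀ j, PI j) → ℝ, seq 0 = μ0 →
          (∀ n, seq (n + 1) = fun π' => ∑ π, seq n π * A π π') →
          Filter.Tendsto seq Filter.atTop (nhds μstar)) := by
  obtain rfl : A = updateMatrix lam γ κ BR h T := funext₂ hA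
  have hε : 0 < ∏ i, min (γ i) (κ i) / Fintype.card (PI i) :=
    prod_pos fun i _ => div_pos (lt_min (hγ i).1 (hκ i).1) (Nat.cast_pos.2 Fintype.card_pos)
  obtain ⟨μ, hμ, hstat, huniq, hconv⟩ := exists_unique_stationary_tendsto_of_le hε
    (prod_min_div_card_le_updateMatrix hlam hγ hκ hh0)
    (sum_updateMatrix hBRne hh1)
  refine ⟨μ, hμ.1, hμ.2, congrFun hstat, fun ν h0 h1 hν => huniq ν ⟨h0, h1⟩ (funext hν), ?_,
    fun μ0 h0 h1 seq hseq0 hseq => ?_⟩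
  · have hP : 0 < ∏ i, κ i / (Fintype.card (PI i) : ℝ) :=
      prod_pos fun i _ => div_pos (hκ i).1 (Nat.cast_pos.2 Fintype.card_pos)
    have hGP : 0 < ∑ i, γ i + ∏ i, κ i / (Fintype.card (PI i) : ℝ) :=
      add_pos_of_nonneg_of_pos (sum_nonneg fun i _ => (hγ i).1.le) hP
    rw [one_sub_div hGP.ne', add_sub_cancel_left]
    exact div_add_le_sum_of_vecMul_eq hμ hstat T hGP
      (fun π => one_sub_sum_le_sum_updateMatrix hlam hγ hκ hh0 hTBR)
      (fun π => prod_div_card_le_sum_updateMatrix hlam hγ hκ hh0 hTne)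
  · have hseq_iterate : seq = fun n => (· ᵥ* updateMatrix lam γ κ BR h T)^[n] μ0 :=
      funext fun n => by
        induction n with
        | zero => exact hseq0
        | succ n ih => rw [hseq n, ih, Function.iterate_succ_apply']; rfl
    exact hseq_iterate ▸ hconv μ0 ⟨h0, h1⟩

/-- Lemma 2 (Idealized Update Procedure): with independent per-player transitions
given by the mixture `(1 − γⁱ) R^{i,λⁱ}(· | πⁱ, BRⁱ(π⁻ⁱ)) + γⁱ Unif(Πⁱ)` when
`π ∈ T` and `(1 − κⁱ) hⁱ(· | πⁱ, BRⁱ(π⁻ⁱ)) + κⁱ Unif(Πⁱ)` when `π ∉ T`, the induced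
chain `A` on `Π = Π¹ × ⋯ × Πᴺ` has a unique stationary distribution `μ*` with
`μ*(T) ≥ 1 − (Σᵢ γⁱ)/(Σᵢ γⁱ + ∏ᵢ κⁱ/|Πⁱ|)`, and `μ₀ Aⁿ → μ*` for every
probability vector `μ₀`. -/
theorem idealized_update_procedure
    {N : ℕ} (hN : 1 ≤ N) (PI : Fin N → Type*)
    [∀ i, Fintype (PI i)] [∀ i, Nonempty (PI i)] [∀ i, DecidableEq (PI i)]
    (lam : Fin N → ℝ) (hlam : ∀ i, lam i ∈ Set.Icc (0 : ℝ) 1)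
    (γ κ : Fin N → ℝ)
    (hγ : ∀ i, γ i ∈ Set.Ioo (0 : ℝ) 1) (hκ : ∀ i, κ i ∈ Set.Ioo (0 : ℝ) 1)
    (BR : ∀ i : Fin N, (∀ j, PI j) → Finset (PI i))
    (hBRne : ∀ i π, (BR i π).Nonempty)
    (hBRdep : ∀ i, ∀ π π' : ∀ j, PI j, (∀ j, j ≠ i → π j = π' j) → BR i π = BR i π')
    (h : ∀ i : Fin N, PI i → Finset (PI i) → PI i → ℝ)
    (hh0 : ∀ i p B q, 0 ≤ h i p B q) (hh1 : ∀ i p B, ∑ q, h i p B q = 1)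
    (T : Finset (∀ j, PI j)) (hTne : T.Nonempty)
    (hTBR : ∀ π ∈ T, ∀ i, π i ∈ BR i π)
    (A : (∀ j, PI j) → (∀ j, PI j) → ℝ)
    (hA : ∀ π π', A π π' =
      ∏ i, (if π ∈ T then
          (1 - γ i) * inertialKernel (lam i) (π i) (BR i π) (π' i) +
            γ i * (1 / (Fintype.card (PI i) : ℝ))
        else
          (1 - κ i) * h i (π i) (BR i π) (π' i) +
            κ i * (1 / (Fintype.card (PI i) : ℝ)))) :
    ∃ μstar : (∀ j, PI j) → ℝ,
      (∀ π, 0 ≤ μstar π) ∧ (∑ π, μstar π = 1) ∧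
      (∀ π', ∑ π, μstar π * A π π' = μstar π') ∧
      (∀ ν : (∀ j, PI j) → ℝ, (∀ π, 0 ≤ ν π) → (∑ π, ν π = 1) →
        (∀ π', ∑ π, ν π * A π π' = ν π') → ν = μstar) ∧
      (1 - (∑ i, γ i) / ((∑ i, γ i) + ∏ i, κ i / (Fintype.card (PI i) : ℝ)) ≤
        ∑ π ∈ T, μstar π) ∧
      (∀ μ0 : (∀ j, PI j) → ℝ, (∀ π, 0 ≤ μ0 π) → (∑ π, μ0 π = 1) →
        ∀ seq : ℕ → (∀ j, PI j) → ℝ, seq 0 = μ0 →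
          (∀ n, seq (n + 1) = fun π' => ∑ π, seq n π * A π π') →
          Filter.Tendsto seq Filter.atTop (nhds μstar)) :=
  idealized_update_procedure_general PI lam hlam γ κ hγ hκ BR hBRne h hh0 hh1 T hTne hTBR A hA
end

section
/- Let (Ω, F, P) be a probability space, let S be a finite set with a nonempty subset T, and let {x_k}_{k∈ℕ} be an S-valued stochastic process. Suppose there exist q ∈ (0,1], sequences {ε_k}, {γ_k} of nonnegative reals with Σ_k ε_k < ∞ and Σ_k γ_k < ∞, and an index k̃ such that for all k ≥ k̃ (whenever the conditioning events have positive probability): P(x_{k+1} ∈ T | x_k ∈ T) ≥ (1 − ε_k)(1 − γ_k) and P(x_{k+1} ∈ T | x_k ∉ T) ≥ (1 − ε_k)·q. Then Σ_{k∈ℕ} P(x_k ∉ T) < ∞, and consequently P(x_k ∉ T for infinitely many k) = 0. -/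
open MeasureTheory

/-- Borel–Cantelli-type argument from the proof of Theorem 3 (part 1): let `{x_k}` be
an `S`-valued process on a probability space, `T ⊆ S` nonempty, `q ∈ (0,1]`, and
`{ε_k}, {γ_k}` summable nonnegative sequences such that for all `k ≥ k̃` (whenever the
conditioning events have positive probability)
`P(x_{k+1} ∈ T | x_k ∈ T) ≥ (1 − ε_k)(1 − γ_k)` and
`P(x_{k+1} ∈ T | x_k ∉ T) ≥ (1 − ε_k) q`. Then `Σ_k P(x_k ∉ T) < ∞`, and hence
`P(x_k ∉ T for infinitely many k) = 0`. Conditional probability is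
`P(A | B) = P(A ∩ B)/P(B)`. -/
theorem almost_sure_absorption
    {Ω : Type*} [MeasurableSpace Ω] (P : Measure Ω) [IsProbabilityMeasure P]
    {S : Type*} [Fintype S] (T : Set S) (hT : T.Nonempty)
    (x : ℕ → Ω → S) (hmeas : ∀ k, MeasurableSet {ω | x k ω ∈ T})
    (q : ℝ) (hq : q ∈ Set.Ioc (0 : ℝ) 1)
    (ε γ : ℕ → ℝ)
    (hε0 : ∀ k, 0 ≤ ε k) (hγ0 : ∀ k, 0 ≤ γ k)
    (hεsum : Summable ε) (hγsum : Summable γ)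
    (ktil : ℕ)
    (hin : ∀ k ≥ ktil, P {ω | x k ω ∈ T} ≠ 0 →
      (1 - ε k) * (1 - γ k) ≤
        (P ({ω | x (k + 1) ω ∈ T} ∩ {ω | x k ω ∈ T})).toReal /
          (P {ω | x k ω ∈ T}).toReal)
    (hout : ∀ k ≥ ktil, P {ω | x k ω ∉ T} ≠ 0 →
      (1 - ε k) * q ≤
        (P ({ω | x (k + 1) ω ∈ T} ∩ {ω | x k ω ∉ T})).toReal /
          (P {ω | x k ω ∉ T}).toReal) :
    Summable (fun k => (P {ω | x k ω ∉ T}).toReal) ∧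
      P (Filter.limsup (fun k => {ω | x k ω ∉ T}) Filter.atTop) = 0 := by
  obtain ⟨hq0, hq1⟩ := hq
  set A : ℕ → Set Ω := fun k => {ω | x k ω ∈ T} with hA
  set B : ℕ → Set Ω := fun k => {ω | x k ω ∉ T} with hB
  have hBc : ∀ k, B k = (A k)ᶜ := fun k => rfl
  set a : ℕ → ℝ := fun k => (P (A k)).toReal with ha
  set b : ℕ → ℝ := fun k => (P (B k)).toReal with hbdef
  have hb0 : ∀ k, 0 ≤ b k := fun k => ENNReal.toReal_nonneg
  have ha0 : ∀ k, 0 ≤ a k := fun k => ENNReal.toReal_nonneg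
  have hab : ∀ k, a k + b k = 1 := by
    intro k
    have h := measure_add_measure_compl (μ := P) (hmeas k)
    rw [measure_univ] at h
    have h2 := congrArg ENNReal.toReal h
    rw [ENNReal.toReal_add (measure_ne_top _ _) (measure_ne_top _ _),
      ENNReal.toReal_one] at h2
    simpa [ha, hbdef, hBc k] using h2
  -- key inequality
  have key : ∀ k ≥ ktil,
      (1 - ε k) * (1 - γ k) * a k + (1 - ε k) * q * b k ≤ a (k + 1) := by
    intro k hk
    have hdecomp :
        (P (A (k + 1) ∩ A k)).toReal + (P (A (k + 1) ∩ B k)).toReal = a (k + 1) := by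
      have h := measure_inter_add_diff (μ := P) (A (k + 1)) (hmeas k)
      rw [Set.diff_eq, ← hBc k] at h
      have h2 := congrArg ENNReal.toReal h
      rwa [ENNReal.toReal_add (measure_ne_top _ _) (measure_ne_top _ _)] at h2
    have h1 : (1 - ε k) * (1 - γ k) * a k ≤ (P (A (k + 1) ∩ A k)).toReal := by
      by_cases h : P (A k) = 0
      · have hA0 : a k = 0 := by simp [ha, h]
        rw [hA0, mul_zero]; exact ENNReal.toReal_nonneg
      · have hpos : 0 < a k := ENNReal.toReal_pos h (measure_ne_top _ _)
        exact (le_div_iff₀ hpos).mp (hin k hk h)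
    have h2 : (1 - ε k) * q * b k ≤ (P (A (k + 1) ∩ B k)).toReal := by
      by_cases h : P (B k) = 0
      · have hB0 : b k = 0 := by simp [hbdef, h]
        rw [hB0, mul_zero]; exact ENNReal.toReal_nonneg
      · have hpos : 0 < b k := ENNReal.toReal_pos h (measure_ne_top _ _)
        exact (le_div_iff₀ hpos).mp (hout k hk h)
    linarith
  -- recursion on b
  have hrec : ∀ k ≥ ktil, ε k ≤ 1 → b (k + 1) ≤ (1 - q) * b k + (ε k + γ k) := by
    intro k hk hε1
    have hkey := key k hk
    have h1 := hab k
    have h2 := hab (k + 1)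
    nlinarith [hb0 k, hb0 (k + 1), hε0 k, hγ0 k,
      mul_nonneg (mul_nonneg (sub_nonneg.2 hε1) (hγ0 k)) (hb0 k),
      mul_nonneg (hε0 k) (hγ0 k),
      mul_nonneg (mul_nonneg (hε0 k) (hb0 k)) (sub_nonneg.2 hq1)]
  -- choose k₀
  have hε_to : Filter.Tendsto ε Filter.atTop (nhds 0) := hεsum.tendsto_atTop_zero
  obtain ⟨k₀, hk₀⟩ := Filter.eventually_atTop.mp
    ((hε_to.eventually_lt_const zero_lt_one).and (Filter.eventually_ge_atTop ktil))
  -- summable tail of ε+γ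
  have hCsum : Summable (fun n => ε (n + k₀) + γ (n + k₀)) :=
    (summable_nat_add_iff k₀).mpr (hεsum.add hγsum)
  set C := ∑' n, (ε (n + k₀) + γ (n + k₀)) with hC
  have hc0 : ∀ n, 0 ≤ ε (n + k₀) + γ (n + k₀) := fun n => add_nonneg (hε0 _) (hγ0 _)
  have hpartial : ∀ N, ∑ i ∈ Finset.range N, (ε (i + k₀) + γ (i + k₀)) ≤ C :=
    fun N => Summable.sum_le_tsum _ (fun i _ => hc0 i) hCsum
  -- partial sum bound
  have hbound : ∀ N, ∑ n ∈ Finset.range N, b (n + k₀) ≤ (b k₀ + C) / q := by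
    intro N
    rw [le_div_iff₀ hq0]
    match N with
    | 0 =>
      simp only [Finset.range_zero, Finset.sum_empty, zero_mul]
      have := hpartial 0
      simp only [Finset.range_zero, Finset.sum_empty] at this
      linarith [hb0 k₀]
    | Nat.succ n =>
      have hterm : ∀ i, b (i + k₀ + 1) ≤ (1 - q) * b (i + k₀) + (ε (i + k₀) + γ (i + k₀)) := by
        intro i
        have h := hk₀ (i + k₀) (Nat.le_add_left _ _)
        exact hrec (i + k₀) h.2 h.1.le
      have h1 : ∑ i ∈ Finset.range n, b (i + k₀ + 1) ≤
          (1 - q) * ∑ i ∈ Finset.range n, b (i + k₀) +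
          ∑ i ∈ Finset.range n, (ε (i + k₀) + γ (i + k₀)) := by
        rw [Finset.mul_sum, ← Finset.sum_add_distrib]
        exact Finset.sum_le_sum (fun i _ => hterm i)
      have h2 : ∑ i ∈ Finset.range n, b (i + k₀) ≤ ∑ i ∈ Finset.range (n + 1), b (i + k₀) :=
        Finset.sum_le_sum_of_subset_of_nonneg
          (Finset.range_subset_range.2 (Nat.le_succ n)) (fun i _ _ => hb0 _)
      have h3 := hpartial n
      have h4 : ∑ i ∈ Finset.range (n + 1), b (i + k₀) =
          (∑ i ∈ Finset.range n, b (i + k₀ + 1)) + b k₀ := by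
        rw [Finset.sum_range_succ']
        congr 1
        · exact Finset.sum_congr rfl fun i _ => by rw [Nat.add_right_comm]
        · rw [Nat.zero_add]
      have h5 : (1 - q) * ∑ i ∈ Finset.range n, b (i + k₀) ≤
          (1 - q) * ∑ i ∈ Finset.range (n + 1), b (i + k₀) :=
        mul_le_mul_of_nonneg_left h2 (by linarith)
      nlinarith [h1, h3, h4, h5]
  have hsum_shift : Summable (fun n => b (n + k₀)) :=
    summable_of_sum_range_le (fun n => hb0 _) hbound
  have hbsum : Summable b := (summable_nat_add_iff k₀).mp hsum_shift
  refine ⟨hbsum, ?_⟩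
  have hnn : Summable (fun k => (P (B k)).toNNReal) := by
    rw [← NNReal.summable_coe]
    exact hbsum
  have htop : (∑' k, ((P (B k)).toNNReal : ENNReal)) ≠ ⊤ :=
    ENNReal.tsum_coe_ne_top_iff_summable.mpr hnn
  have heq : ∀ k, ((P (B k)).toNNReal : ENNReal) = P (B k) :=
    fun k => ENNReal.coe_toNNReal (measure_ne_top _ _)
  rw [tsum_congr heq] at htop
  exact measure_limsup_atTop_eq_zero htop
end

section
/- Let (Ω, F, P) be a probability space, let S be a finite set with a nonempty subset E, let L ∈ ℕ with L ≥ 1, let p ∈ (0,1], and let {x_k}_{k∈ℕ} be an S-valued stochastic process. Suppose there exist a sequence {c_k} of nonnegative reals and an index k̃ such that for all k ≥ k̃ (whenever the conditioning events have positive probability): P(x_{k+L} ∈ E | x_k ∈ E) ≥ 1 − c_k and P(x_{k+L} ∈ E | x_k ∉ E) ≥ p·(1 − c_k). Then limsup_{k→∞} P(x_k ∉ E) ≤ (limsup_{k→∞} c_k)/p. -/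
/-!
Write `q_k = P(x_k ∉ E)`. Splitting `{x_{k+L} ∈ E}` along `{x_k ∈ E}` and using the two
conditional bounds gives the one-step recursion `q_{k+L} ≤ c_k + (1 - p) q_k` for `k ≥ k̃`.
Taking limsups (the shift by `L` does not change the limsup `Q` of `q`) yields
`Q ≤ limsup c + (1 - p) Q`, and since `Q ≤ 1` is finite it can be cancelled to `p Q ≤ limsup c`.
-/

open MeasureTheory Filter ENNReal

section OneStep

variable {Ω : Type*} [MeasurableSpace Ω] {μ : Measure Ω}

/-- When `μ B = 0` the hypothesis is vacuous, but then both sides vanish. -/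
theorem mul_measureReal_le_of_le_div [IsFiniteMeasure μ] {A B : Set Ω} {r : ℝ}
    (h : μ B ≠ 0 → r ≤ μ.real (A ∩ B) / μ.real B) : r * μ.real B ≤ μ.real (A ∩ B) := by
  by_cases hB : μ B = 0
  · simp [Measure.real, hB]
  · exact (le_div_iff₀ (ENNReal.toReal_pos hB (measure_ne_top μ B))).1 (h hB)

theorem measureReal_compl_le_of_inter_ge [IsProbabilityMeasure μ] {I J : Set Ω}
    (hI : MeasurableSet I) (hJ : MeasurableSet J) {c p : ℝ} (hc : 0 ≤ c) (hp : p ≤ 1)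
    (hin : (1 - c) * μ.real I ≤ μ.real (J ∩ I))
    (hout : p * (1 - c) * μ.real Iᶜ ≤ μ.real (J ∩ Iᶜ)) :
    μ.real Jᶜ ≤ c + (1 - p) * μ.real Iᶜ := by
  have hJ_split : μ.real (J ∩ I) + μ.real (J ∩ Iᶜ) = μ.real J := by
    rw [← Set.sdiff_eq, measureReal_inter_add_sdiff hI]
  have hI_compl := probReal_add_probReal_compl (μ := μ) hI
  have hJ_compl := probReal_add_probReal_compl (μ := μ) hJ
  -- with `b = μ.real Iᶜ`: `μ.real Jᶜ ≤ 1 - (1 - c)(1 - b) - p(1 - c)b = c + (1 - c)(1 - p)b`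
  nlinarith [mul_nonneg (mul_nonneg hc (sub_nonneg.2 hp)) (measureReal_nonneg (μ := μ) (s := Iᶜ))]

theorem measure_compl_le_of_inter_ge [IsProbabilityMeasure μ] {I J : Set Ω}
    (hI : MeasurableSet I) (hJ : MeasurableSet J) {c p : ℝ} (hc : 0 ≤ c) (hp0 : 0 ≤ p)
    (hp1 : p ≤ 1) (hin : (1 - c) * μ.real I ≤ μ.real (J ∩ I))
    (hout : p * (1 - c) * μ.real Iᶜ ≤ μ.real (J ∩ Iᶜ)) :
    μ Jᶜ ≤ ENNReal.ofReal c + (1 - ENNReal.ofReal p) * μ Iᶜ := by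
  rw [← ofReal_one, ← ofReal_sub _ hp0, ← ofReal_measureReal (μ := μ) (s := Iᶜ),
    ← ofReal_mul (sub_nonneg.2 hp1), ← ofReal_measureReal (μ := μ) (s := Jᶜ)]
  exact (ofReal_le_ofReal (measureReal_compl_le_of_inter_ge hI hJ hc hp1 hin hout)).trans
    ofReal_add_le

end OneStep

theorem ENNReal.mul_limsup_le_of_eventually_shift_le {q a : ℕ → ℝ≥0∞} {r : ℝ≥0∞} (L : ℕ)
    (hr : r ≤ 1) (hq : limsup q atTop ≠ ∞)
    (h : ∀ᶠ k in atTop, q (k + L) ≤ a k + (1 - r) * q k) :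
    r * limsup q atTop ≤ limsup a atTop := by
  set Q := limsup q atTop
  have h1r : 1 - r ≠ ∞ := ne_top_of_le_ne_top one_ne_top tsub_le_self
  refine le_of_forall_gt_imp_ge_of_dense fun C hC => ?_
  have hrec : Q ≤ C + (1 - r) * Q :=
    calc Q = limsup (fun k => q (k + L)) atTop := (limsup_nat_add q L).symm
      _ ≤ limsup (fun k => C + (1 - r) * q k) atTop := by
        refine limsup_le_limsup ?_
        filter_upwards [h, eventually_lt_of_limsup_lt hC] with k hk hCk
        exact hk.trans (add_le_add_left hCk.le _)
      _ = C + (1 - r) * Q := by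
        rw [limsup_const_add atTop _ _ (by isBoundedDefault) (by isBoundedDefault),
          limsup_const_mul_of_ne_top h1r]
  have hsplit : r * Q + (1 - r) * Q = Q := by rw [← add_mul, add_tsub_cancel_of_le hr, one_mul]
  exact (ENNReal.add_le_add_iff_right (mul_ne_top h1r hq)).1 (hsplit.le.trans hrec)

theorem limsup_escape_probability_bound_general
    {Ω : Type*} [MeasurableSpace Ω] (P : Measure Ω) [IsProbabilityMeasure P]
    {S : Type*} (E : Set S)
    (x : ℕ → Ω → S) (hmeas : ∀ k, MeasurableSet {ω | x k ω ∈ E})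
    (L : ℕ) (p : ℝ) (hp : p ∈ Set.Ioc (0 : ℝ) 1)
    (c : ℕ → ℝ) (hc0 : ∀ k, 0 ≤ c k)
    (ktil : ℕ)
    (hin : ∀ k ≥ ktil, P {ω | x k ω ∈ E} ≠ 0 →
      1 - c k ≤
        (P ({ω | x (k + L) ω ∈ E} ∩ {ω | x k ω ∈ E})).toReal /
          (P {ω | x k ω ∈ E}).toReal)
    (hout : ∀ k ≥ ktil, P {ω | x k ω ∉ E} ≠ 0 →
      p * (1 - c k) ≤
        (P ({ω | x (k + L) ω ∈ E} ∩ {ω | x k ω ∉ E})).toReal /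
          (P {ω | x k ω ∉ E}).toReal) :
    Filter.limsup (fun k => P {ω | x k ω ∉ E}) Filter.atTop ≤
      Filter.limsup (fun k => ENNReal.ofReal (c k)) Filter.atTop / ENNReal.ofReal p := by
  obtain ⟨hp0, hp1⟩ := hp
  have hstep : ∀ k ≥ ktil, P {ω | x (k + L) ω ∉ E} ≤
      ENNReal.ofReal (c k) + (1 - ENNReal.ofReal p) * P {ω | x k ω ∉ E} := fun k hk =>
    measure_compl_le_of_inter_ge (hmeas k) (hmeas (k + L)) (hc0 k) hp0.le hp1
      (mul_measureReal_le_of_le_div (hin k hk)) (mul_measureReal_le_of_le_div (hout k hk))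
  have hfinite : limsup (fun k => P {ω | x k ω ∉ E}) atTop ≠ ∞ :=
    ne_top_of_le_ne_top one_ne_top (limsup_le_of_le (by isBoundedDefault)
      (Eventually.of_forall fun _ => prob_le_one))
  rw [ENNReal.le_div_iff_mul_le (Or.inl (ofReal_pos.2 hp0).ne') (Or.inl ofReal_ne_top), mul_comm]
  exact ENNReal.mul_limsup_le_of_eventually_shift_le L (ofReal_le_one.2 hp1) hfinite
    (eventually_atTop.2 ⟨ktil, hstep⟩)

/-- From the proof of Theorem 3 (part 3): let `{x_k}` be an `S`-valued process on a
probability space, `E ⊆ S` nonempty, `L ≥ 1`, `p ∈ (0,1]`, and `{c_k}` nonnegative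
reals such that for all `k ≥ k̃` (whenever the conditioning events have positive
probability) `P(x_{k+L} ∈ E | x_k ∈ E) ≥ 1 − c_k` and
`P(x_{k+L} ∈ E | x_k ∉ E) ≥ p (1 − c_k)`. Then
`limsup_k P(x_k ∉ E) ≤ (limsup_k c_k)/p` (limsups in `[0,∞]`). Conditional
probability is `P(A | B) = P(A ∩ B)/P(B)`. -/
theorem limsup_escape_probability_bound
    {Ω : Type*} [MeasurableSpace Ω] (P : Measure Ω) [IsProbabilityMeasure P]
    {S : Type*} [Fintype S] (E : Set S) (hE : E.Nonempty)
    (x : ℕ → Ω → S) (hmeas : ∀ k, MeasurableSet {ω | x k ω ∈ E})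
    (L : ℕ) (hL : 1 ≤ L) (p : ℝ) (hp : p ∈ Set.Ioc (0 : ℝ) 1)
    (c : ℕ → ℝ) (hc0 : ∀ k, 0 ≤ c k)
    (ktil : ℕ)
    (hin : ∀ k ≥ ktil, P {ω | x k ω ∈ E} ≠ 0 →
      1 - c k ≤
        (P ({ω | x (k + L) ω ∈ E} ∩ {ω | x k ω ∈ E})).toReal /
          (P {ω | x k ω ∈ E}).toReal)
    (hout : ∀ k ≥ ktil, P {ω | x k ω ∉ E} ≠ 0 →
      p * (1 - c k) ≤
        (P ({ω | x (k + L) ω ∈ E} ∩ {ω | x k ω ∉ E})).toReal /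
          (P {ω | x k ω ∉ E}).toReal) :
    Filter.limsup (fun k => P {ω | x k ω ∉ E}) Filter.atTop ≤
      Filter.limsup (fun k => ENNReal.ofReal (c k)) Filter.atTop / ENNReal.ofReal p :=
  limsup_escape_probability_bound_general P E x hmeas L p hp c hc0 ktil hin hout
end
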